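/- arXiv:0710.4368 — 15 statements merged into one kernel-verified Lean document; each statement's English description precedes it below -/
import Mathlib

section
/- Let p be a prime and n ≥ 1. Then there is exactly one triple (j, m, k) of natural numbers with j ≥ 1, m ≢ p−1 (mod p), 0 ≤ k < r(j), and 2(m+1)·p^{j+1} + 2(p−1)(k+1) = 2p^{n+2} − 2p, namely (j, m, k) = (1, p^n − 2, p−1). -/
/-- The function `r` governing lengths of `v₁`-towers: `r 0 = 0`, `r 1 = p`,
`r n = p^n + r (n-2)`. -/
def r (p : ℕ) : ℕ → ℕ
  | 0 => 0
  | 1 => p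
  | n + 2 => p ^ (n + 2) + r p n

lemma rC (s : ℕ) : ∀ j, (s + 1) * r (s + 2) j + (s + 2) ≤ (s + 2) ^ (j + 1)
  | 0 => by simp [r]
  | 1 => by
      have : (s + 1) * (s + 2) + (s + 2) = (s + 2) ^ (1 + 1) := by ring
      simp only [r]
      omega
  | (j + 2) => by
      have ih := rC s j
      have h1 : (s + 1) * r (s + 2) (j + 2) + (s + 2)
          = (s + 1) * (s + 2) ^ (j + 2) + ((s + 1) * r (s + 2) j + (s + 2)) := by
        simp only [r]; ring
      have h2 : (s + 1) * (s + 2) ^ (j + 2) + (s + 2) ^ (j + 1) ≤ (s + 2) ^ (j + 2 + 1) := by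
        have h3 : (s + 2) ^ (j + 1) ≤ (s + 2) ^ (j + 2) :=
          Nat.pow_le_pow_right (by omega) (by omega)
        have h4 : (s + 1) * (s + 2) ^ (j + 2) + (s + 2) ^ (j + 2) = (s + 2) ^ (j + 2 + 1) := by
          ring
        omega
      omega

lemma rD (s : ℕ) (j : ℕ) :
    (s + 1) * r (s + 2) (j + 2) + (s + 2) + (s + 2) ^ (j + 1) ≤ (s + 2) ^ (j + 3) := by
  have ih := rC s j
  have h1 : (s + 1) * r (s + 2) (j + 2) + (s + 2)
      = (s + 1) * (s + 2) ^ (j + 2) + ((s + 1) * r (s + 2) j + (s + 2)) := by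
    simp only [r]; ring
  have h3 : (s + 2) ^ (j + 1) + (s + 2) ^ (j + 1) ≤ (s + 2) ^ (j + 2) := by
    have : ((s + 2) ^ (j + 1)) * 2 ≤ ((s + 2) ^ (j + 1)) * (s + 2) :=
      Nat.mul_le_mul_left _ (by omega)
    have h4 : ((s + 2) ^ (j + 1)) * (s + 2) = (s + 2) ^ (j + 2) := by ring
    omega
  have h5 : (s + 1) * (s + 2) ^ (j + 2) + (s + 2) ^ (j + 2) = (s + 2) ^ (j + 3) := by ring
  omega

/-- For a prime `p` and `n ≥ 1`, the unique triple `(j, m, k)` with `j ≥ 1`,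
`m ≢ p−1 (mod p)`, `k < r j` and `2(m+1)p^(j+1) + 2(p−1)(k+1) = 2p^(n+2) − 2p`
is `(1, p^n − 2, p − 1)`. -/
theorem stmt0 (p n : ℕ) (hp : p.Prime) (hn : 1 ≤ n) :
    ∀ j m k : ℕ,
      (1 ≤ j ∧ m % p ≠ p - 1 ∧ k < r p j ∧
        2 * (m + 1) * p ^ (j + 1) + 2 * (p - 1) * (k + 1) = 2 * p ^ (n + 2) - 2 * p)
      ↔ (j, m, k) = (1, p ^ n - 2, p - 1) := by
  obtain ⟨s, rfl⟩ : ∃ s, p = s + 2 := ⟨p - 2, by have := hp.two_le; omega⟩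
  have hp1 : s + 2 - 1 = s + 1 := by omega
  have hpn : 2 ≤ (s + 2) ^ n := le_trans (by omega) (Nat.le_self_pow (by omega) _)
  obtain ⟨q, hq⟩ : ∃ q, (s + 2) ^ n = q + 2 := ⟨(s + 2) ^ n - 2, by omega⟩
  intro j m k
  constructor
  · rintro ⟨hj, hm, hk, heq⟩
    -- Basic equation without the factor 2 and without subtraction
    have E : (m + 1) * (s + 2) ^ (j + 1) + ((s + 1) * (k + 1) + (s + 2)) = (s + 2) ^ (n + 2) := by
      rw [hp1] at heq
      have hA : 2 * (m + 1) * (s + 2) ^ (j + 1) = 2 * ((m + 1) * (s + 2) ^ (j + 1)) := by ring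
      have hB : 2 * (s + 1) * (k + 1) = 2 * ((s + 1) * (k + 1)) := by ring
      rw [hA, hB] at heq
      have hC : s + 2 ≤ (s + 2) ^ (n + 2) := Nat.le_self_pow (by omega) _
      set A := (m + 1) * (s + 2) ^ (j + 1)
      set B := (s + 1) * (k + 1)
      set C := (s + 2) ^ (n + 2)
      omega
    have hposB : 0 < (s + 1) * (k + 1) + (s + 2) := by omega
    have hApos : (s + 2) ^ (j + 1) ≤ (m + 1) * (s + 2) ^ (j + 1) :=
      Nat.le_mul_of_pos_left _ (by omega)
    have hjn : j + 1 < n + 2 := by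
      have h1 : (s + 2) ^ (j + 1) < (s + 2) ^ (n + 2) := by omega
      exact (Nat.pow_lt_pow_iff_right (by omega)).mp h1
    have hdvd : (s + 2) ^ (j + 1) ∣ (s + 1) * (k + 1) + (s + 2) := by
      have h1 : (s + 2) ^ (j + 1) ∣ (s + 2) ^ (n + 2) := pow_dvd_pow _ (by omega)
      rw [← E] at h1
      exact (Nat.dvd_add_right ⟨m + 1, by ring⟩).mp h1
    have hge : (s + 2) ^ (j + 1) ≤ (s + 1) * (k + 1) + (s + 2) := Nat.le_of_dvd hposB hdvd
    -- rule out j ≥ 2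
    obtain ⟨j', rfl⟩ : ∃ j', j = j' + 1 := ⟨j - 1, by omega⟩
    rcases j' with _ | j''
    · -- j = 1
      have hk1 : k + 1 ≤ s + 2 := by have h := hk; simp only [r] at h; omega
      have hub : (s + 1) * (k + 1) + (s + 2) ≤ (s + 2) ^ (0 + 1 + 1) := by
        have h1 : (s + 1) * (k + 1) ≤ (s + 1) * (s + 2) := Nat.mul_le_mul_left _ hk1
        have h2 : (s + 1) * (s + 2) + (s + 2) = (s + 2) ^ (0 + 1 + 1) := by ring
        omega
      have heqB : (s + 1) * (k + 1) + (s + 2) = (s + 2) ^ (0 + 1 + 1) := by omega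
      have hkval : k + 1 = s + 2 := by
        have h2 : (s + 1) * (s + 2) + (s + 2) = (s + 2) ^ (0 + 1 + 1) := by ring
        have h3 : (s + 1) * (k + 1) = (s + 1) * (s + 2) := by omega
        exact Nat.eq_of_mul_eq_mul_left (by omega) h3
      have hmval : m + 2 = (s + 2) ^ n := by
        have h1 : (m + 1) * (s + 2) ^ (0 + 1 + 1) + (s + 2) ^ (0 + 1 + 1)
            = (s + 2) ^ (n + 2) := by omega
        have h2 : (s + 2) ^ (n + 2) = (s + 2) ^ n * (s + 2) ^ (0 + 1 + 1) := by ring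
        have h3 : (m + 2) * (s + 2) ^ (0 + 1 + 1) = (s + 2) ^ n * (s + 2) ^ (0 + 1 + 1) := by
          rw [← h2, ← h1]; ring
        have := Nat.eq_of_mul_eq_mul_right
          (show 0 < (s + 2) ^ (0 + 1 + 1) by positivity) h3
        omega
      simp only [Prod.mk.injEq]
      refine ⟨trivial, by omega, by omega⟩
    · -- j = j'' + 2 : contradiction
      exfalso
      have hge' : (s + 2) ^ (j'' + 3) ≤ (s + 1) * (k + 1) + (s + 2) := hge
      have hk1 : k + 1 ≤ r (s + 2) (j'' + 2) := hk
      have h1 : (s + 1) * (k + 1) ≤ (s + 1) * r (s + 2) (j'' + 2) := Nat.mul_le_mul_left _ hk1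
      have h2 := rD s j''
      have h3 : 0 < (s + 2) ^ (j'' + 1) := by positivity
      omega
  · rintro h
    simp only [Prod.mk.injEq] at h
    obtain ⟨rfl, rfl, rfl⟩ := h
    refine ⟨le_refl 1, ?_, ?_, ?_⟩
    · -- ((s+2)^n - 2) % (s+2) = s ≠ s + 1
      obtain ⟨n', rfl⟩ : ∃ n', n = n' + 1 := ⟨n - 1, by omega⟩
      have hupos : 0 < (s + 2) ^ n' := by positivity
      obtain ⟨u, hu⟩ : ∃ u, (s + 2) ^ n' = u + 1 := ⟨(s + 2) ^ n' - 1, by omega⟩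
      have hval : (s + 2) ^ (n' + 1) - 2 = s + (s + 2) * u := by
        have h1 : (s + 2) ^ (n' + 1) = (s + 2) * (u + 1) := by
          rw [pow_succ, hu]; ring
        have h2 : (s + 2) * (u + 1) = (s + 2) * u + (s + 2) := by ring
        set w := (s + 2) * u
        omega
      rw [hval, hp1, Nat.add_mul_mod_self_left, Nat.mod_eq_of_lt (by omega)]
      omega
    · simp only [r, hp1]
      omega
    · rw [hp1]
      have hm : (s + 2) ^ n - 2 = q := by omega
      rw [hm]
      symm
      apply Nat.sub_eq_of_eq_add
      have h1 : (s + 2) ^ (n + 2) = (q + 2) * (s + 2) ^ 2 := by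
        rw [pow_add, hq]
      rw [h1]
      ring
end

section
/- Let p be a prime and n ≥ 0. Then there is no triple (j, m, k) of natural numbers with j ≥ 1, m ≢ p−1 (mod p), 0 ≤ k < r(j), such that 2(m+1)·p^{j+1} + 2(p−1)(k+1) equals 2p^{n+2} − 2, and there is no such triple with that quantity equal to 2p^{n+2}. -/
/-- Key bound: `(p-1) * r p j + 2 ≤ p^(j+1)` for `p ≥ 2`. -/
lemma r_bound (p : ℕ) (hp : 2 ≤ p) : ∀ j, (p - 1) * r p j + 2 ≤ p ^ (j + 1)
  | 0 => by simpa [r] using hp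
  | 1 => by
      have h2 : (p - 1) * p + 1 * p = p * p := by
        rw [← Nat.add_mul, Nat.sub_add_cancel (by omega)]
      have h3 : p ^ (1 + 1) = p * p := by ring
      simp only [r]
      omega
  | (j + 2) => by
      have ih := r_bound p hp j
      have h1 : p ^ (j + 1) ≤ p ^ (j + 2) := Nat.pow_le_pow_right (by omega) (by omega)
      have h2 : (p - 1) * p ^ (j + 2) + 1 * p ^ (j + 2) = p * p ^ (j + 2) := by
        rw [← Nat.add_mul, Nat.sub_add_cancel (by omega)]
      have h2' : p * p ^ (j + 2) = p ^ (j + 2 + 1) := by ring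
      have h3 : (p - 1) * r p (j + 2) = (p - 1) * p ^ (j + 2) + (p - 1) * r p j := by
        simp [r, Nat.mul_add]
      omega

/-- Unified contradiction: if `(m+1)p^(j+1) + (p-1)(k+1) + d = p^(n+2)` with `d ≤ 1`
and `k < r p j`, then `p^(j+1)` divides the positive quantity `(p-1)(k+1) + d`,
which is however strictly smaller than `p^(j+1)` by `r_bound`. -/
lemma key (p : ℕ) (hp : 2 ≤ p) (j n m k : ℕ) (hj : 1 ≤ j) (hk : k < r p j)
    (d : ℕ) (hd2 : d ≤ 1)
    (h : (m + 1) * p ^ (j + 1) + (p - 1) * (k + 1) + d = p ^ (n + 2)) : False := by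
  set P := p ^ (j + 1) with hP
  set B := (p - 1) * (k + 1) with hB
  have hPpos : 0 < P := pow_pos (by omega) _
  have hBpos : 0 < B := Nat.mul_pos (by omega) (by omega)
  have hPle : P ≤ p ^ (n + 2) := by
    have : 1 * P ≤ (m + 1) * P := Nat.mul_le_mul_right P (by omega)
    omega
  have hjn : j + 1 ≤ n + 2 := by
    by_contra hcon
    have := Nat.pow_lt_pow_right (show 1 < p by omega) (show n + 2 < j + 1 by omega)
    omega
  have hdvdA : P ∣ (m + 1) * P := Dvd.dvd.mul_left dvd_rfl _
  have hdvdBd : P ∣ B + d := by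
    have he : B + d = p ^ (n + 2) - (m + 1) * P := by omega
    rw [he]
    exact Nat.dvd_sub (pow_dvd_pow p hjn) hdvdA
  have hrb := r_bound p hp j
  have hBle : B + 2 ≤ P := by
    have : B ≤ (p - 1) * r p j := Nat.mul_le_mul_left _ (by omega)
    omega
  have : P ≤ B + d := Nat.le_of_dvd (by omega) hdvdBd
  omega

/-- For a prime `p` and `n ≥ 0`, there is no triple `(j, m, k)` with `j ≥ 1`,
`m ≢ p−1 (mod p)`, `k < r j` and `2(m+1)p^(j+1) + 2(p−1)(k+1)` equal to
`2p^(n+2) − 2`, and none with that quantity equal to `2p^(n+2)`. -/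
theorem stmt1 (p n : ℕ) (hp : p.Prime) :
    (¬ ∃ j m k : ℕ, 1 ≤ j ∧ m % p ≠ p - 1 ∧ k < r p j ∧
        2 * (m + 1) * p ^ (j + 1) + 2 * (p - 1) * (k + 1) = 2 * p ^ (n + 2) - 2) ∧
    (¬ ∃ j m k : ℕ, 1 ≤ j ∧ m % p ≠ p - 1 ∧ k < r p j ∧
        2 * (m + 1) * p ^ (j + 1) + 2 * (p - 1) * (k + 1) = 2 * p ^ (n + 2)) := by
  have hp2 := hp.two_le
  have hC : 1 ≤ p ^ (n + 2) := Nat.one_le_pow _ _ (by omega)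
  constructor
  · rintro ⟨j, m, k, hj, hm, hk, heq⟩
    have e1 : 2 * (m + 1) * p ^ (j + 1) = 2 * ((m + 1) * p ^ (j + 1)) := by ring
    have e2 : 2 * (p - 1) * (k + 1) = 2 * ((p - 1) * (k + 1)) := by ring
    exact key p hp2 j n m k hj hk 1 le_rfl (by omega)
  · rintro ⟨j, m, k, hj, hm, hk, heq⟩
    have e1 : 2 * (m + 1) * p ^ (j + 1) = 2 * ((m + 1) * p ^ (j + 1)) := by ring
    have e2 : 2 * (p - 1) * (k + 1) = 2 * ((p - 1) * (k + 1)) := by ring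
    exact key p hp2 j n m k hj hk 0 (by omega) (by omega)
end

section
/- Let p be a prime and n ≥ 0. Then there is exactly one triple (j, m, k) of natural numbers with j ≥ 1, m ≢ p−1 (mod p), 0 ≤ k < r(j), and 2(m+1)·p^{j+1} + 2(p−1)(k+1) = 2p^{n+2} + 2p − 2, namely (j, m, k) = (n+1, 0, 0). -/
theorem r_mul_lt (p : ℕ) (hp : 2 ≤ p) : ∀ j, (p - 1) * r p j < p ^ (j + 1)
  | 0 => by simp [r]; omega
  | 1 => by
    show (p - 1) * p < p ^ 2
    obtain ⟨q, rfl⟩ : ∃ q, p = q + 2 := ⟨p - 2, by omega⟩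
    have h3 : q + 2 - 1 = q + 1 := by omega
    rw [h3]
    nlinarith
  | (j + 2) => by
    have ih := r_mul_lt p hp j
    show (p - 1) * (p ^ (j + 2) + r p j) < p ^ (j + 3)
    have h1 : p ^ (j + 2) = p ^ (j + 1) * p := (pow_succ p (j + 1))
    have h2 : p ^ (j + 3) = p ^ (j + 1) * p * p := by ring
    obtain ⟨q, rfl⟩ : ∃ q, p = q + 2 := ⟨p - 2, by omega⟩
    have h3 : q + 2 - 1 = q + 1 := by omega
    rw [h3, h1, h2, Nat.mul_add]
    nlinarith [ih, pow_pos (show 0 < q + 2 by omega) (j + 1)]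

/-- For a prime `p` and `n ≥ 0`, the unique triple `(j, m, k)` with `j ≥ 1`,
`m ≢ p−1 (mod p)`, `k < r j` and `2(m+1)p^(j+1) + 2(p−1)(k+1) = 2p^(n+2) + 2p − 2`
is `(n+1, 0, 0)`. -/
theorem stmt2 (p n : ℕ) (hp : p.Prime) :
    ∀ j m k : ℕ,
      (1 ≤ j ∧ m % p ≠ p - 1 ∧ k < r p j ∧
        2 * (m + 1) * p ^ (j + 1) + 2 * (p - 1) * (k + 1) = 2 * p ^ (n + 2) + 2 * p - 2)
      ↔ (j, m, k) = (n + 1, 0, 0) := by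
  have hp2 : 2 ≤ p := hp.two_le
  intro j m k
  constructor
  · rintro ⟨hj, hm, hk, heq⟩
    have e1 : 2 * (m + 1) * p ^ (j + 1) = 2 * ((m + 1) * p ^ (j + 1)) := by ring
    have e2 : 2 * (p - 1) * (k + 1) = 2 * ((p - 1) * (k + 1)) := by ring
    rw [e1, e2] at heq
    have key : (m + 1) * p ^ (j + 1) + (p - 1) * (k + 1) = p ^ (n + 2) + (p - 1) := by
      have hpow : 1 ≤ p ^ (n + 2) := Nat.one_le_pow _ _ (by omega)
      omega
    -- Step 1: j ≤ n + 1
    have hjle : j + 1 ≤ n + 2 := by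
      by_contra h
      push_neg at h
      have h1 : p ^ (n + 3) ≤ p ^ (j + 1) := Nat.pow_le_pow_right (by omega) (by omega)
      have h2 : p ^ (j + 1) ≤ (m + 1) * p ^ (j + 1) := Nat.le_mul_of_pos_left _ (by omega)
      have h3 : 2 * p ^ (n + 2) ≤ p ^ (n + 3) := by
        rw [pow_succ p (n + 2)]
        nlinarith [Nat.one_le_pow (n + 2) p (show 0 < p by omega)]
      have h4 : p - 1 < p ^ (n + 2) :=
        lt_of_lt_of_le (by omega) (Nat.le_self_pow (by omega) p)
      omega
    -- Step 2: k = 0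
    have hdvd : p ^ (j + 1) ∣ p ^ (n + 2) := pow_dvd_pow p hjle
    have hYlt : (p - 1) * (k + 1) < p ^ (j + 1) :=
      lt_of_le_of_lt (Nat.mul_le_mul_left _ (by omega)) (r_mul_lt p hp2 j)
    have hplt : p - 1 < p ^ (j + 1) :=
      lt_of_lt_of_le (by omega) (Nat.le_self_pow (by omega) p)
    have hmod : ((p - 1) * (k + 1)) % p ^ (j + 1) = (p - 1) % p ^ (j + 1) := by
      have := congrArg (· % p ^ (j + 1)) key
      simpa [Nat.add_mul_mod_self_left, Nat.mul_mod_left, Nat.add_mod,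
        Nat.mul_mod_right, Nat.eq_zero_of_dvd_of_lt, (Nat.mod_eq_zero_of_dvd hdvd)] using this
    have hY : (p - 1) * (k + 1) = p - 1 := by
      rwa [Nat.mod_eq_of_lt hYlt, Nat.mod_eq_of_lt hplt] at hmod
    have hk0 : k = 0 := by
      have h1 : (p - 1) * (k + 1) = (p - 1) * 1 := by rw [hY, Nat.mul_one]
      have := Nat.eq_of_mul_eq_mul_left (show 0 < p - 1 by omega) h1
      omega
    have hB : (m + 1) * p ^ (j + 1) = p ^ (n + 2) := by omega
    -- Step 3: j = n + 1, m = 0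
    have hcan : p ^ (j + 1) * (m + 1) = p ^ (j + 1) * p ^ (n + 1 - j) := by
      rw [Nat.mul_comm, hB, ← pow_add]
      congr 1
      omega
    have hm1 : m + 1 = p ^ (n + 1 - j) :=
      Nat.eq_of_mul_eq_mul_left (pow_pos (show 0 < p by omega) (j + 1)) hcan
    have hjn : j = n + 1 := by
      by_contra hne
      have hdv : p ∣ m + 1 := hm1 ▸ dvd_pow_self p (show n + 1 - j ≠ 0 by omega)
      obtain ⟨t, ht⟩ := hdv
      rcases t with _ | t
      · omega
      · have hmt : m = (p - 1) + p * (t + 1 - 1) := by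
          have ht' : p * (t + 1) = p * t + p := by ring
          have ht'' : t + 1 - 1 = t := by omega
          rw [ht'']
          omega
        apply hm
        rw [hmt, Nat.add_mul_mod_self_left, Nat.mod_eq_of_lt (by omega)]
    have hmz : m = 0 := by
      rw [hjn] at hm1
      simp at hm1
      omega
    simp [hjn, hmz, hk0]
  · rintro h
    injection h with h1 h2
    injection h2 with h2 h3
    subst h1; subst h2; subst h3
    refine ⟨by omega, by simp [Nat.zero_mod]; omega, ?_, ?_⟩
    · show 0 < r p (n + 1)
      cases n with
      | zero => show 0 < p; omega
      | succ n => show 0 < p ^ (n + 2) + r p n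
                  have := Nat.one_le_pow (n + 2) p (by omega)
                  omega
    · have hpow : 1 ≤ p ^ (n + 2) := Nat.one_le_pow _ _ (by omega)
      ring_nf
      omega
end

section
/- Let p be a prime and n ≥ 0. Then there is exactly one triple (j, m, k) of natural numbers with j ≥ 1, m ≢ p−1 (mod p), 0 ≤ k < r(j), and D(j, m) + 2(p−1)·k = 2p^{n+2} − 1, namely (j, m, k) = (n+2, 0, r(n)). -/
/-- The degree of the class `x_{j,m} = λ_j μ^{p^(j−1) m}` in `THH_*(ℓ; k(1))`. -/
def D (p j m : ℕ) : ℕ :=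
  if j % 2 = 0 then 2 * (p - 1) * r p (j - 1) + 2 * p - 1 + 2 * m * p ^ (j + 1)
  else 2 * (p - 1) * (r p (j - 1) + 1) + 1 + 2 * m * p ^ (j + 1)

/-!
Write `D(j, m) + 2(p−1)k + 1 = 2((p−1)(r(j−1) + k) + p + m p^{j+1})`. Since
`(p−1)(r(j−1) + r(j)) + p = p^{j+1}`, the condition `k < r(j)` gives
`0 < a < p^{j+1}` for `a = (p−1)(r(j−1) + k) + p`. So `a + m p^{j+1} = p^{n+2}`
forces `j + 1 > n + 2` (otherwise `p^{j+1}` would divide `a`), hence `m = 0` and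
`r(j−1) + k = r(n) + r(n+1)`; as `r` is strictly increasing with `r(n+1) < p^{n+2}`, this leaves
only `j = n + 2`, `k = r(n)`.
-/

section

variable {p : ℕ}

lemma sub_one_mul_r_add_r_succ_add_self (hp : 1 ≤ p) (n : ℕ) :
    (p - 1) * (r p n + r p (n + 1)) + p = p ^ (n + 2) := by
  obtain ⟨q, rfl⟩ := Nat.exists_eq_add_of_le' hp
  rw [Nat.add_sub_cancel]
  induction n with
  | zero => simp only [r]; ring
  | succ n ih =>
    simp only [r] at ih ⊢
    linear_combination ih

lemma r_succ_lt_pow (hp : 2 ≤ p) (n : ℕ) : r p (n + 1) < p ^ (n + 2) := by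
  have h := sub_one_mul_r_add_r_succ_add_self (by omega : 1 ≤ p) n
  have : r p n + r p (n + 1) ≤ (p - 1) * (r p n + r p (n + 1)) :=
    Nat.le_mul_of_pos_left _ (by omega)
  omega

lemma pow_le_r : ∀ {n : ℕ}, 1 ≤ n → p ^ n ≤ r p n
  | 1, _ => by simp [r]
  | _ + 2, _ => Nat.le_add_right _ _

lemma r_strictMono (hp : 2 ≤ p) : StrictMono (r p) := by
  refine strictMono_nat_of_lt_succ fun n => ?_
  cases n with
  | zero => simp only [r]; omega
  | succ n => exact (r_succ_lt_pow hp n).trans_le (pow_le_r (by omega))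

lemma D_add_one (hp : 1 ≤ p) (j m : ℕ) :
    D p j m + 1 = 2 * ((p - 1) * r p (j - 1) + p + m * p ^ (j + 1)) := by
  obtain ⟨q, rfl⟩ := Nat.exists_eq_add_of_le' hp
  rw [D, Nat.add_sub_cancel]
  split_ifs
  · rw [Nat.add_sub_assoc (by omega), show 2 * (q + 1) - 1 = 2 * q + 1 by omega]; ring
  · ring

lemma D_add_eq_iff (hp : 1 ≤ p) (j m k N : ℕ) :
    D p j m + 2 * (p - 1) * k = 2 * p ^ N - 1 ↔
      (p - 1) * (r p (j - 1) + k) + p + m * p ^ (j + 1) = p ^ N := by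
  have h := D_add_one hp j m
  rw [mul_add, mul_assoc]
  omega

lemma sub_one_mul_r_add_add_lt_pow (hp : 2 ≤ p) {j k : ℕ} (hj : 1 ≤ j) (hk : k < r p j) :
    (p - 1) * (r p (j - 1) + k) + p < p ^ (j + 1) := by
  obtain ⟨i, rfl⟩ := Nat.exists_eq_add_of_le' hj
  rw [Nat.add_sub_cancel, ← sub_one_mul_r_add_r_succ_add_self (by omega : 1 ≤ p) i]
  have := Nat.mul_lt_mul_of_pos_left (Nat.add_lt_add_left hk (r p i)) (by omega : 0 < p - 1)
  omega

end

lemma eq_zero_and_lt_of_add_mul_pow_eq_pow {p a m i N : ℕ} (hp : 1 < p) (ha : 0 < a)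
    (hai : a < p ^ i) (h : a + m * p ^ i = p ^ N) : m = 0 ∧ N < i := by
  have hNi : N < i := by
    by_contra! hiN
    have hdvd : p ^ i ∣ a := by
      have := pow_dvd_pow p hiN
      rw [← h] at this
      exact (Nat.dvd_add_left (dvd_mul_left _ _)).mp this
    exact absurd (Nat.eq_zero_of_dvd_of_lt hdvd hai) ha.ne'
  refine ⟨?_, hNi⟩
  by_contra hm
  have := Nat.pow_lt_pow_right hp hNi
  have := Nat.le_mul_of_pos_left (p ^ i) (Nat.pos_of_ne_zero hm)
  omega

lemma eq_of_r_pred_add_eq {p n j k : ℕ} (hp : 2 ≤ p) (hj : n + 2 ≤ j)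
    (h : r p (j - 1) + k = r p n + r p (n + 1)) : j = n + 2 ∧ k = r p n := by
  obtain rfl | hj' := hj.eq_or_lt
  · exact ⟨rfl, by rw [show n + 2 - 1 = n + 1 from rfl] at h; omega⟩
  · have hmono := (r_strictMono hp).monotone (show n + 2 ≤ j - 1 by omega)
    have := r_succ_lt_pow hp n
    simp only [r] at hmono
    omega

/-- For a prime `p` and `n ≥ 0`, the unique triple `(j, m, k)` with `j ≥ 1`,
`m ≢ p−1 (mod p)`, `k < r j` and `D(j,m) + 2(p−1)k = 2p^(n+2) − 1` is
`(n+2, 0, r n)`. -/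
theorem stmt3 (p n : ℕ) (hp : p.Prime) :
    ∀ j m k : ℕ,
      (1 ≤ j ∧ m % p ≠ p - 1 ∧ k < r p j ∧
        D p j m + 2 * (p - 1) * k = 2 * p ^ (n + 2) - 1)
      ↔ (j, m, k) = (n + 2, 0, r p n) := by
  intro j m k
  have hp2 := hp.two_le
  have hsum := sub_one_mul_r_add_r_succ_add_self hp.one_le n
  simp only [D_add_eq_iff hp.one_le, Prod.mk.injEq]
  constructor
  · rintro ⟨hj, -, hk, h⟩
    obtain ⟨rfl, hjn⟩ := eq_zero_and_lt_of_add_mul_pow_eq_pow hp.one_lt (by omega)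
      (sub_one_mul_r_add_add_lt_pow hp2 hj hk) h
    rw [← hsum, zero_mul, add_zero, Nat.add_right_cancel_iff] at h
    obtain ⟨rfl, rfl⟩ :=
      eq_of_r_pred_add_eq hp2 (by omega) (Nat.eq_of_mul_eq_mul_left (by omega) h)
    exact ⟨rfl, rfl, rfl⟩
  · rintro ⟨rfl, rfl, rfl⟩
    have := r_strictMono hp2 (show n < n + 2 by omega)
    refine ⟨by omega, by rw [Nat.zero_mod]; omega, this, ?_⟩
    simpa [add_comm] using hsum
end

section
/- Let p be a prime and n ≥ 0. Then there is exactly one triple (j, m, k) of natural numbers with j ≥ 1, m ≢ p−1 (mod p), 0 ≤ k < r(j), and D(j, m) + 2(p−1)·k = 2p^{n+2} + 2p − 3, namely (j, m, k) = (n+2, 0, r(n)+1). -/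
lemma key_s4 (p : ℕ) (hp : 1 ≤ p) : ∀ i, (p - 1) * (r p i + r p (i + 1)) + p = p ^ (i + 2)
  | 0 => by
    obtain ⟨q, rfl⟩ : ∃ q, p = q + 1 := ⟨p - 1, by omega⟩
    simp [r]; ring
  | (i + 1) => by
    have h := key_s4 p hp i
    show (p - 1) * (r p (i+1) + (p ^ (i+2) + r p i)) + p = p ^ (i + 3)
    obtain ⟨q, rfl⟩ : ∃ q, p = q + 1 := ⟨p - 1, by omega⟩
    simp only [Nat.add_sub_cancel] at h ⊢
    calc q * (r (q+1) (i+1) + ((q+1) ^ (i+2) + r (q+1) i)) + (q+1)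
        = (q * (r (q+1) i + r (q+1) (i+1)) + (q+1)) + q * (q+1) ^ (i+2) := by ring
      _ = (q+1) ^ (i+2) + q * (q+1) ^ (i+2) := by rw [h]
      _ = (q+1) ^ (i+3) := by ring

lemma r_lower (p : ℕ) : ∀ i, 1 ≤ i → p ^ i ≤ r p i
  | 1, _ => by simp [r]
  | (i + 2), _ => Nat.le_add_right _ _

/-- For a prime `p` and `n ≥ 0`, the unique triple `(j, m, k)` with `j ≥ 1`,
`m ≢ p−1 (mod p)`, `k < r j` and `D(j,m) + 2(p−1)k = 2p^(n+2) + 2p − 3` is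
`(n+2, 0, r n + 1)`. -/
theorem stmt4 (p n : ℕ) (hp : p.Prime) :
    ∀ j m k : ℕ,
      (1 ≤ j ∧ m % p ≠ p - 1 ∧ k < r p j ∧
        D p j m + 2 * (p - 1) * k = 2 * p ^ (n + 2) + 2 * p - 3)
      ↔ (j, m, k) = (n + 2, 0, r p n + 1) := by
  have hp2 : 2 ≤ p := hp.two_le
  intro j m k
  constructor
  · rintro ⟨hj, hm, hk, heq⟩
    obtain ⟨i, rfl⟩ : ∃ i, j = i + 1 := ⟨j - 1, by omega⟩
    -- derive master equation
    have hE : (p - 1) * r p i + (p - 1) * k + m * p ^ (i + 2) + 1 = p ^ (n + 2) := by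
      unfold D at heq
      simp only [Nat.add_sub_cancel, show i + 1 + 1 = i + 2 from rfl,
        mul_add, mul_one, mul_assoc] at heq
      split_ifs at heq with hje <;> omega
    have hkey := key_s4 p (by omega) i
    simp only [mul_add] at hkey
    -- upper bound on the low part
    have hb : (p - 1) * r p i + (p - 1) * k + (p - 1) + p ≤ p ^ (i + 2) := by
      have h1 : (p - 1) * (k + 1) ≤ (p - 1) * r p (i + 1) :=
        Nat.mul_le_mul_left _ (by omega)
      simp only [mul_add, mul_one] at h1
      omega
    -- i ≥ n + 1
    have hin : n + 1 ≤ i := by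
      by_contra hlt
      have h1 : p ^ (i + 2) ∣ p ^ (n + 2) := pow_dvd_pow p (by omega)
      have h2 : p ^ (i + 2) ∣ m * p ^ (i + 2) := dvd_mul_left _ _
      have h4 := Nat.dvd_sub h1 h2
      have h5 : p ^ (n + 2) - m * p ^ (i + 2) = (p - 1) * r p i + (p - 1) * k + 1 := by
        omega
      rw [h5] at h4
      have hle := Nat.le_of_dvd (by omega) h4
      omega
    -- m = 0
    have hm0 : m = 0 := by
      by_contra hm1
      have h1 : p ^ (n + 3) ≤ p ^ (i + 2) := Nat.pow_le_pow_right (by omega) (by omega)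
      have h2 : p ^ (i + 2) ≤ m * p ^ (i + 2) := Nat.le_mul_of_pos_left _ (by omega)
      have h3 : p * p ^ (n + 2) = p ^ (n + 3) := by ring
      have h4 : 2 * p ^ (n + 2) ≤ p * p ^ (n + 2) := Nat.mul_le_mul_right _ hp2
      omega
    subst hm0
    simp only [zero_mul] at hE
    -- i = n + 1
    have hin2 : i = n + 1 := by
      by_contra hne
      have h1 : p ^ (n + 2) ≤ p ^ i := Nat.pow_le_pow_right (by omega) (by omega)
      have h2 : p ^ i ≤ r p i := r_lower p i (by omega)
      have h3 : r p i ≤ (p - 1) * r p i := Nat.le_mul_of_pos_left _ (by omega)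
      omega
    subst hin2
    have hkn := key_s4 p (by omega) n
    simp only [mul_add] at hkn
    have hkk : (p - 1) * k = (p - 1) * (r p n + 1) := by
      simp only [mul_add, mul_one]
      omega
    have hkeq : k = r p n + 1 := Nat.eq_of_mul_eq_mul_left (by omega) hkk
    simp [hkeq]
  · intro h
    obtain ⟨h1, h2, h3⟩ : j = n + 2 ∧ m = 0 ∧ k = r p n + 1 := by
      simpa [Prod.ext_iff] using h
    subst h1; subst h2; subst h3
    have hkn := key_s4 p (by omega) n
    simp only [mul_add] at hkn
    have hplt : 1 < p ^ (n + 2) := Nat.one_lt_pow (by omega) hp2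
    refine ⟨by omega, by simp; omega, ?_, ?_⟩
    · show r p n + 1 < p ^ (n + 2) + r p n
      omega
    · unfold D
      simp only [Nat.add_sub_cancel, zero_mul, mul_zero, add_zero,
        show n + 2 - 1 = n + 1 from rfl, mul_add, mul_one, mul_assoc]
      split_ifs with hje <;> omega
end

section
/- Let p be a prime, n ≥ 1, j ≥ 1, and 1 ≤ k' ≤ p−1, and suppose j·p − k' ≥ 2. Then the p-adic valuation of the binomial coefficient C((j·p − 1)·p^{n−1} − 1, k'·p^{n−1}) equals the p-adic valuation of j·p − k' − 1. -/
private lemma mod_pred_of_dvd {d a : ℕ} (hd : 0 < d) (ha : 0 < a) (h : d ∣ a) :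
    (a - 1) % d = d - 1 := by
  obtain ⟨c, rfl⟩ := h
  have hc : 0 < c := by
    rcases Nat.eq_zero_or_pos c with rfl | h
    · simp at ha
    · exact h
  obtain ⟨c', rfl⟩ := Nat.exists_eq_succ_of_ne_zero hc.ne'
  have h1 : d * (c' + 1) - 1 = d * c' + (d - 1) := by
    rw [Nat.mul_succ]; omega
  rw [h1, Nat.mul_add_mod, Nat.mod_eq_of_lt (by omega)]

/-- For a prime `p`, `n ≥ 1`, `j ≥ 1`, `1 ≤ k' ≤ p − 1` with `j p − k' ≥ 2`,
the `p`-adic valuation of `C((j p − 1) p^(n−1) − 1, k' p^(n−1))` equals the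
`p`-adic valuation of `j p − k' − 1`. -/
theorem stmt7 (p n j k' : ℕ) (hp : p.Prime) (hn : 1 ≤ n) (hj : 1 ≤ j)
    (hk1 : 1 ≤ k') (hk2 : k' ≤ p - 1) (h2 : 2 ≤ j * p - k') :
    padicValNat p (Nat.choose ((j * p - 1) * p ^ (n - 1) - 1) (k' * p ^ (n - 1))) =
      padicValNat p (j * p - k' - 1) := by
  haveI : Fact p.Prime := ⟨hp⟩
  have hp2 : 2 ≤ p := hp.two_le
  set m : ℕ := p ^ (n - 1) with hm
  have hm1 : 1 ≤ m := Nat.one_le_pow _ _ hp.pos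
  set K : ℕ := j * p - k' - 1 with hKdef
  have hjp : k' + 2 ≤ j * p := by omega
  have hK1 : 1 ≤ K := by omega
  have hk'p : k' < p := by omega
  set v : ℕ := padicValNat p K with hv
  have hsum : (j * p - 1) * m = K * m + k' * m := by
    rw [← Nat.add_mul]; congr 1; omega
  have hKm1 : 1 ≤ K * m := Nat.one_le_iff_ne_zero.mpr (by positivity)
  have hkm1 : 1 ≤ k' * m := Nat.one_le_iff_ne_zero.mpr (by positivity)
  have hkN : k' * m ≤ (j * p - 1) * m - 1 := by omega
  have hNk : (j * p - 1) * m - 1 - k' * m = K * m - 1 := by omega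
  -- characterization of carries
  have hcarry : ∀ i, 1 ≤ i →
      (p ^ i ≤ k' * m % p ^ i + (K * m - 1) % p ^ i ↔ (n ≤ i ∧ i < n + v)) := by
    intro i hi
    have hpi1 : 1 ≤ p ^ i := Nat.one_le_pow _ _ hp.pos
    rcases lt_or_ge i n with hin | hin
    · -- no carry for i < n
      have hdvd : p ^ i ∣ m := pow_dvd_pow p (by omega)
      have h1 : k' * m % p ^ i = 0 := Nat.mod_eq_zero_of_dvd (hdvd.mul_left k')
      have hmod : (K * m - 1) % p ^ i = p ^ i - 1 :=
        mod_pred_of_dvd (by omega) (by omega) (hdvd.mul_left K)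
      rw [h1, hmod]
      omega
    · -- i ≥ n : write i = (n-1) + t
      set t : ℕ := i - (n - 1) with ht
      have ht1 : 1 ≤ t := by omega
      have hpi : p ^ i = m * p ^ t := by
        rw [hm, ← pow_add]; congr 1; omega
      have hppt : p ≤ p ^ t := Nat.le_self_pow (by omega) p
      have hkmod : k' * m % p ^ i = k' * m := by
        have h11 : k' * m < p * m := mul_lt_mul_of_pos_right hk'p (by omega)
        have h12 : p * m ≤ p ^ t * m := mul_le_mul_left hppt m
        have h13 : p ^ t * m = m * p ^ t := Nat.mul_comm _ _
        rw [hpi, Nat.mod_eq_of_lt (by omega)]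
      rw [hkmod]
      have hiff : p ^ i ≤ k' * m + (K * m - 1) % p ^ i ↔ p ^ t ∣ K := by
        constructor
        · intro hle
          by_contra hndvd
          set r : ℕ := K % p ^ t with hr
          have hr1 : 1 ≤ r := Nat.one_le_iff_ne_zero.mpr fun h0 =>
            hndvd (Nat.dvd_of_mod_eq_zero h0)
          have hrlt : r < p ^ t := Nat.mod_lt _ (by positivity)
          have hrm : 1 ≤ r * m := Nat.one_le_iff_ne_zero.mpr (by positivity)
          have hdecomp : K * m - 1 = m * p ^ t * (K / p ^ t) + (r * m - 1) := by
            have hKr : K = p ^ t * (K / p ^ t) + r := (Nat.div_add_mod K (p ^ t)).symm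
            have h3 : K * m = m * p ^ t * (K / p ^ t) + r * m := by
              nth_rewrite 1 [hKr]; ring
            omega
          have hlt3 : r * m - 1 < m * p ^ t := by
            have h8 := mul_le_mul_left hrlt.le m
            have h9 : p ^ t * m = m * p ^ t := Nat.mul_comm _ _
            omega
          have hmod : (K * m - 1) % p ^ i = r * m - 1 := by
            rw [hpi, hdecomp, Nat.mul_add_mod, Nat.mod_eq_of_lt hlt3]
          rw [hmod, hpi] at hle
          have hlt : p ^ t < k' + r := by
            by_contra hle2
            push_neg at hle2
            have h5 : (k' + r) * m ≤ p ^ t * m := mul_le_mul_left hle2 m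
            have h6 : (k' + r) * m = k' * m + r * m := Nat.add_mul k' r m
            have h7 : m * p ^ t = p ^ t * m := Nat.mul_comm _ _
            omega
          have hKk : K + k' = j * p - 1 := by omega
          have hmod2 : (j * p - 1) % p ^ t = r + k' - p ^ t := by
            have e1 : (K + k') % p ^ t = (r + k') % p ^ t := by
              conv_lhs => rw [show K = p ^ t * (K / p ^ t) + r from
                (Nat.div_add_mod K (p ^ t)).symm]
              rw [Nat.add_assoc, Nat.mul_add_mod]
            rw [← hKk, e1, Nat.mod_eq_sub_mod (by omega), Nat.mod_eq_of_lt (by omega)]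
          have hmodp : (j * p - 1) % p = p - 1 := by
            have e2 : (j - 1) * p + p = j * p := by
              obtain ⟨j', rfl⟩ := Nat.exists_eq_succ_of_ne_zero (by omega : j ≠ 0)
              rw [Nat.succ_sub_one, Nat.succ_mul]
            rw [show j * p - 1 = (p - 1) + (j - 1) * p from by omega,
              Nat.add_mul_mod_self_right, Nat.mod_eq_of_lt (by omega)]
          have hge : p - 1 ≤ (j * p - 1) % p ^ t := by
            calc p - 1 = (j * p - 1) % p := hmodp.symm
              _ = (j * p - 1) % p ^ t % p :=
                (Nat.mod_mod_of_dvd _ (dvd_pow_self p (by omega))).symm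
              _ ≤ (j * p - 1) % p ^ t := Nat.mod_le _ _
          omega
        · intro hdvd
          have hdvd' : p ^ i ∣ K * m := by
            rw [hpi, Nat.mul_comm m (p ^ t)]
            exact Nat.mul_dvd_mul hdvd dvd_rfl
          have hmod : (K * m - 1) % p ^ i = p ^ i - 1 :=
            mod_pred_of_dvd (by omega) (by omega) hdvd'
          omega
      rw [hiff]
      have hdvdiff : p ^ t ∣ K ↔ t ≤ v := by
        rw [hv]; exact padicValNat_dvd_iff_le (by omega)
      rw [hdvdiff]
      omega
  -- apply Kummer's theorem
  set N : ℕ := (j * p - 1) * m - 1 with hN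
  set b : ℕ := Nat.log p N + n + v + 1 with hb
  rw [padicValNat_choose (p := p) hkN (b := b) (by omega)]
  have hfilter : ((Finset.Ico 1 b).filter
      fun i => p ^ i ≤ k' * m % p ^ i + (N - k' * m) % p ^ i) = Finset.Ico n (n + v) := by
    ext i
    simp only [Finset.mem_filter, Finset.mem_Ico]
    constructor
    · rintro ⟨⟨hi1, _⟩, hcar⟩
      rw [hN, hNk] at hcar
      exact (hcarry i hi1).mp hcar
    · rintro ⟨hni, hinv⟩
      refine ⟨⟨by omega, by omega⟩, ?_⟩
      rw [hN, hNk]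
      exact (hcarry i (by omega)).mpr ⟨hni, hinv⟩
  rw [hfilter, Nat.card_Ico]
  omega
end

section
/- Let p be a prime and n ≥ 1. Then there is no pair (i, k) of natural numbers with i ≥ 1, k < L(i), and p²·i + (p−1)·k = p^{n+2} − p. -/
/-!
Write `i = p^v m` with `v = ν_p(i)`. Since `(p - 1) L(i) + p = p^(v+2)`, the equation becomes
`p^(v+2) m + r = p^(n+2)` with `r = (p - 1) k + p` and `0 < r < p^(v+2)` because `k < L(i)`.
Then `p^(v+2) ≤ p^(n+2)`, so `p^(v+2)` divides `p^(n+2)` and hence `r`, which is impossible.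
-/

/-- The length `L(i) = p + p² + ⋯ + p^(ν_p(i)+1)` of the `v₁`-tower on `b_i`. -/
def L (p i : ℕ) : ℕ := ∑ t ∈ Finset.range (padicValNat p i + 1), p ^ (t + 1)

open Finset

lemma sub_one_mul_sum_range_pow_succ_add {p : ℕ} (hp : 1 ≤ p) (m : ℕ) :
    (p - 1) * ∑ t ∈ range m, p ^ (t + 1) + p = p ^ (m + 1) := by
  obtain ⟨q, rfl⟩ : ∃ q, p = q + 1 := ⟨p - 1, by omega⟩
  have hgeom := geom_sum_mul_add q m
  simp only [pow_succ, ← sum_mul, add_tsub_cancel_right] at hgeom ⊢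
  calc q * ((∑ t ∈ range m, (q + 1) ^ t) * (q + 1)) + (q + 1)
      = ((∑ t ∈ range m, (q + 1) ^ t) * q + 1) * (q + 1) := by ring
    _ = (q + 1) ^ m * (q + 1) := by rw [hgeom]

lemma sub_one_mul_L_add {p : ℕ} (hp : 1 ≤ p) (i : ℕ) :
    (p - 1) * L p i + p = p ^ (padicValNat p i + 2) :=
  sub_one_mul_sum_range_pow_succ_add hp _

lemma sub_one_mul_add_lt_of_lt_L {p i k : ℕ} (hp : 1 < p) (hk : k < L p i) :
    (p - 1) * k + p < p ^ (padicValNat p i + 2) := by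
  have hL := sub_one_mul_L_add hp.le i
  have hmono : (p - 1) * (k + 1) ≤ (p - 1) * L p i := Nat.mul_le_mul_left _ hk
  rw [Nat.mul_succ] at hmono
  omega

theorem stmt8_general (p n : ℕ) (hp : p.Prime) :
    ¬ ∃ i k : ℕ, 1 ≤ i ∧ k < L p i ∧
      p ^ 2 * i + (p - 1) * k = p ^ (n + 2) - p := by
  rintro ⟨i, k, hi, hk, heq⟩
  have hp1 := hp.one_lt
  obtain ⟨m, hm⟩ : p ^ padicValNat p i ∣ i := pow_padicValNat_dvd
  set v := padicValNat p i
  set r := (p - 1) * k + p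
  have hr : r < p ^ (v + 2) := sub_one_mul_add_lt_of_lt_L hp1 hk
  have hm0 : 0 < m := Nat.pos_of_ne_zero (by rintro rfl; omega)
  have hp_le : p ≤ p ^ (n + 2) := Nat.le_self_pow (by omega) p
  have hsplit : p ^ (v + 2) * m + r = p ^ (n + 2) := by
    have : p ^ 2 * i = p ^ (v + 2) * m := by rw [hm]; ring
    omega
  have hle : p ^ (v + 2) ≤ p ^ (n + 2) :=
    (Nat.le_mul_of_pos_right _ hm0).trans (hsplit ▸ Nat.le_add_right _ _)
  have hdvd : p ^ (v + 2) ∣ p ^ (n + 2) :=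
    pow_dvd_pow p ((Nat.pow_le_pow_iff_right hp1).mp hle)
  rw [← hsplit, Nat.dvd_add_right (dvd_mul_right _ _)] at hdvd
  exact Nat.not_dvd_of_pos_of_lt (by omega) hr hdvd

/-- For a prime `p` and `n ≥ 1`, there is no pair `(i, k)` with `i ≥ 1`,
`k < L(i)` and `p² i + (p−1) k = p^(n+2) − p`. -/
theorem stmt8 (p n : ℕ) (hp : p.Prime) (hn : 1 ≤ n) :
    ¬ ∃ i k : ℕ, 1 ≤ i ∧ k < L p i ∧
      p ^ 2 * i + (p - 1) * k = p ^ (n + 2) - p :=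
  stmt8_general p n hp
end

section
/- Let p be a prime, n ≥ 0, and 2 ≤ c ≤ p. Then there is no pair (i, k) of natural numbers with i ≥ 1, k < L(i), and 2c·p^{n+2} − 2p + 2 ≤ 2p²·i + 2p − 2 + 2(p−1)·k ≤ 2c·p^{n+2} + 2p − 4. -/
lemma geom_aux (q v : ℕ) :
    (q + 1) * (∑ t ∈ Finset.range (v + 1), (q + 2) ^ (t + 1)) + (q + 2)
      = (q + 2) ^ (v + 2) := by
  induction v with
  | zero => simp; ring
  | succ v ih =>
    rw [Finset.sum_range_succ, Nat.mul_add]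
    calc (q + 1) * (∑ t ∈ Finset.range (v + 1), (q + 2) ^ (t + 1))
          + (q + 1) * (q + 2) ^ (v + 1 + 1) + (q + 2)
        = ((q + 1) * (∑ t ∈ Finset.range (v + 1), (q + 2) ^ (t + 1)) + (q + 2))
          + (q + 1) * (q + 2) ^ (v + 2) := by ring
      _ = (q + 2) ^ (v + 2) + (q + 1) * (q + 2) ^ (v + 2) := by rw [ih]
      _ = (q + 2) ^ (v + 1 + 2) := by ring

lemma upper_aux (a e M pp : ℕ) (hpp : 2 ≤ pp)
    (h : 2 * a + 2 * pp - 2 + 2 * e ≤ 2 * M + 2 * pp - 4) : a < M := by omega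

lemma final_aux (q a b e l X : ℕ) (hab : a + X ≤ b) (hL : l + (q + 2) = X)
    (hkb : e + (q + 1) ≤ l)
    (h1 : 2 * b - 2 * (q + 2) + 2 ≤ 2 * a + 2 * (q + 2) - 2 + 2 * e) : False := by
  omega

/-- For a prime `p`, `n ≥ 0` and `2 ≤ c ≤ p`, there is no pair `(i, k)` with
`i ≥ 1`, `k < L(i)` and `2c p^(n+2) − 2p + 2 ≤ 2p² i + 2p − 2 + 2(p−1)k ≤
2c p^(n+2) + 2p − 4`. -/
theorem stmt9 (p n c : ℕ) (hp : p.Prime) (hc1 : 2 ≤ c) (hc2 : c ≤ p) :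
    ¬ ∃ i k : ℕ, 1 ≤ i ∧ k < L p i ∧
      2 * c * p ^ (n + 2) - 2 * p + 2 ≤ 2 * p ^ 2 * i + 2 * p - 2 + 2 * (p - 1) * k ∧
      2 * p ^ 2 * i + 2 * p - 2 + 2 * (p - 1) * k ≤ 2 * c * p ^ (n + 2) + 2 * p - 4 := by
  rintro ⟨i, k, hi, hk, h1, h2⟩
  have hp2 : 2 ≤ p := hp.two_le
  obtain ⟨q, rfl⟩ : ∃ q, p = q + 2 := ⟨p - 2, by omega⟩
  set v := padicValNat (q + 2) i with hv
  -- p^v divides i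
  have hvd : (q + 2) ^ v ∣ i := pow_padicValNat_dvd
  obtain ⟨j, hij⟩ := hvd
  have hj1 : 1 ≤ j := by
    rcases Nat.eq_zero_or_pos j with h | h
    · subst h; simp at hij; omega
    · exact h
  have hsub : q + 2 - 1 = q + 1 := by omega
  rw [hsub, mul_assoc 2 (q + 1) k] at h1 h2
  -- rewrite 2 * p^2 * i as 2 * (p^(v+2) * j)
  have key2 : 2 * (q + 2) ^ 2 * i = 2 * ((q + 2) ^ (v + 2) * j) := by
    rw [hij, pow_add]; ring
  rw [key2] at h1 h2
  -- from the upper bound: p^(v+2) * j < c * p^(n+2)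
  have haM : (q + 2) ^ (v + 2) * j < c * (q + 2) ^ (n + 2) := by
    have := upper_aux ((q + 2) ^ (v + 2) * j) ((q + 1) * k) (c * (q + 2) ^ (n + 2)) (q + 2)
      (by omega) (by
        calc 2 * ((q + 2) ^ (v + 2) * j) + 2 * (q + 2) - 2 + 2 * ((q + 1) * k)
            = 2 * ((q + 2) ^ (v + 2) * j) + 2 * (q + 2) - 2 + 2 * ((q + 1) * k) := rfl
          _ ≤ 2 * c * (q + 2) ^ (n + 2) + 2 * (q + 2) - 4 := h2
          _ = 2 * (c * (q + 2) ^ (n + 2)) + 2 * (q + 2) - 4 := by rw [mul_assoc])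
    exact this
  -- hence v ≤ n
  have hvn : v ≤ n := by
    by_contra hcon
    push_neg at hcon
    have h3 : (q + 2) ^ (n + 3) ≤ (q + 2) ^ (v + 2) := Nat.pow_le_pow_right (by omega) (by omega)
    have h4 : c * (q + 2) ^ (n + 2) ≤ (q + 2) * (q + 2) ^ (n + 2) :=
      Nat.mul_le_mul_right _ hc2
    have h5 : (q + 2) * (q + 2) ^ (n + 2) = (q + 2) ^ (n + 3) := by
      rw [pow_succ]; ring
    have h6 : (q + 2) ^ (v + 2) ≤ (q + 2) ^ (v + 2) * j := Nat.le_mul_of_pos_right _ (by omega)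
    omega
  -- so p^(v+2) divides c * p^(n+2)
  obtain ⟨m, hm⟩ : (q + 2) ^ (v + 2) ∣ c * (q + 2) ^ (n + 2) :=
    Dvd.dvd.mul_left (pow_dvd_pow _ (by omega)) c
  have hjm : j < m := by
    rw [hm] at haM
    exact Nat.lt_of_mul_lt_mul_left haM
  have hab : (q + 2) ^ (v + 2) * j + (q + 2) ^ (v + 2) ≤ c * (q + 2) ^ (n + 2) := by
    rw [hm]
    calc (q + 2) ^ (v + 2) * j + (q + 2) ^ (v + 2) = (q + 2) ^ (v + 2) * (j + 1) := by ring
      _ ≤ (q + 2) ^ (v + 2) * m := Nat.mul_le_mul_left _ (by omega)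
  -- geometric sum identity
  have hL : (q + 1) * L (q + 2) i + (q + 2) = (q + 2) ^ (v + 2) := geom_aux q v
  have hkb : (q + 1) * k + (q + 1) ≤ (q + 1) * L (q + 2) i := by
    calc (q + 1) * k + (q + 1) = (q + 1) * (k + 1) := by ring
      _ ≤ (q + 1) * L (q + 2) i := Nat.mul_le_mul_left _ (by omega)
  -- conclude
  refine final_aux q ((q + 2) ^ (v + 2) * j) (c * (q + 2) ^ (n + 2)) ((q + 1) * k)
    ((q + 1) * L (q + 2) i) ((q + 2) ^ (v + 2)) hab hL hkb ?_
  calc 2 * (c * (q + 2) ^ (n + 2)) - 2 * (q + 2) + 2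
      = 2 * c * (q + 2) ^ (n + 2) - 2 * (q + 2) + 2 := by rw [mul_assoc]
    _ ≤ 2 * ((q + 2) ^ (v + 2) * j) + 2 * (q + 2) - 2 + 2 * ((q + 1) * k) := h1
end

section
/- Let p be a prime and n ≥ 0. Then the set of pairs (i, t) of natural numbers with i ≥ 1, 0 ≤ t < L(i), and 2p²·i + 2p − 2 + 2(p−1)·t = 2p^{n+3} − 2p is exactly the set { (p^{n+1} − p^k, p + p² + ⋯ + p^{k+1} − 1) : 0 ≤ k ≤ n }. -/
lemma S_eq (q k : ℕ) :
    q * (∑ t ∈ Finset.range (k + 1), (q + 1) ^ (t + 1)) + (q + 1) = (q + 1) ^ (k + 2) := by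
  induction k with
  | zero => simp [Finset.sum_range_one]; ring
  | succ k ih =>
    rw [Finset.sum_range_succ, Nat.mul_add]
    have h1 : (q + 1) ^ (k + 1 + 2) = (q + 1) ^ (k + 2) * (q + 1) := by ring
    have h2 : (q + 1) ^ (k + 1 + 1) = (q + 1) ^ (k + 2) := by ring
    calc q * (∑ t ∈ Finset.range (k + 1), (q + 1) ^ (t + 1)) + q * (q + 1) ^ (k + 1 + 1) + (q + 1)
        = (q * (∑ t ∈ Finset.range (k + 1), (q + 1) ^ (t + 1)) + (q + 1)) + q * (q + 1) ^ (k + 2) := by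
          rw [h2]; ring
      _ = (q + 1) ^ (k + 2) + q * (q + 1) ^ (k + 2) := by rw [ih]
      _ = (q + 1) ^ (k + 1 + 2) := by rw [h1]; ring

lemma S_pos (p k : ℕ) (hp : 0 < p) : 0 < ∑ t ∈ Finset.range (k + 1), p ^ (t + 1) :=
  Finset.sum_pos (fun _ _ => pow_pos hp _) ⟨0, Finset.mem_range.mpr (Nat.succ_pos k)⟩

/-- For a prime `p` and `n ≥ 0`, the set of pairs `(i, t)` with `i ≥ 1`,
`t < L(i)` and `2p² i + 2p − 2 + 2(p−1)t = 2p^(n+3) − 2p` is exactly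
`{ (p^(n+1) − p^k, p + ⋯ + p^(k+1) − 1) : 0 ≤ k ≤ n }`. -/
theorem stmt10 (p n : ℕ) (hp : p.Prime) :
    {q : ℕ × ℕ | 1 ≤ q.1 ∧ q.2 < L p q.1 ∧
        2 * p ^ 2 * q.1 + 2 * p - 2 + 2 * (p - 1) * q.2 = 2 * p ^ (n + 3) - 2 * p} =
    {q : ℕ × ℕ | ∃ k ≤ n,
        q = (p ^ (n + 1) - p ^ k, (∑ t ∈ Finset.range (k + 1), p ^ (t + 1)) - 1)} := by
  haveI : Fact p.Prime := ⟨hp⟩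
  have hp2 : 2 ≤ p := hp.two_le
  obtain ⟨q, rfl⟩ : ∃ q, p = q + 1 := ⟨p - 1, by omega⟩
  set p := q + 1 with hpdef
  have hq1 : 1 ≤ q := by omega
  have hple : p ≤ p ^ (n + 3) := Nat.le_self_pow (by omega) p
  ext ⟨i, t⟩
  simp only [Set.mem_setOf_eq]
  constructor
  · rintro ⟨h1, h2, h3⟩
    set ν := padicValNat p i with hν
    -- convert the equation to a subtraction-free form
    have h2A : 2 * p ^ 2 * i = 2 * (p ^ 2 * i) := by ring
    have h2B : 2 * (p - 1) * t = 2 * (q * t) := by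
      rw [show p - 1 = q from by omega]; ring
    have hmul : q * (t + 1) = q * t + q := by ring
    have heq : p ^ 2 * i + q * (t + 1) + p = p ^ (n + 3) := by omega
    have hSν := S_eq q ν
    rw [← hpdef] at hSν
    -- bounds on i
    have hdvd : p ^ ν ∣ i := pow_padicValNat_dvd
    have hT : t + 1 ≤ ∑ s ∈ Finset.range (ν + 1), p ^ (s + 1) := by
      have h2' : t < L p i := h2
      unfold L at h2'
      rw [← hν] at h2'
      omega
    have hup : q * (t + 1) + p ≤ p ^ (ν + 2) := by
      have := Nat.mul_le_mul_left q hT; omega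
    have hν2 : p ^ (ν + 2) = p ^ 2 * p ^ ν := by ring
    have hn3 : p ^ (n + 3) = p ^ 2 * p ^ (n + 1) := by ring
    have hilt : i < p ^ (n + 1) := by
      have h' : p ^ 2 * i < p ^ 2 * p ^ (n + 1) := by omega
      exact Nat.lt_of_mul_lt_mul_left h'
    have hνle : ν ≤ n := by
      have hpν : p ^ ν ≤ i := Nat.le_of_dvd (by omega) hdvd
      have : p ^ ν < p ^ (n + 1) := by omega
      have := (Nat.pow_lt_pow_iff_right hp.one_lt).mp this
      omega
    have hlow : p ^ (n + 1) ≤ i + p ^ ν := by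
      have h' : p ^ 2 * p ^ (n + 1) ≤ p ^ 2 * (i + p ^ ν) := by
        have : p ^ 2 * (i + p ^ ν) = p ^ 2 * i + p ^ 2 * p ^ ν := by ring
        omega
      exact Nat.le_of_mul_le_mul_left h' (by positivity)
    obtain ⟨m, hm⟩ := hdvd
    have hsplit : p ^ ν * p ^ (n + 1 - ν) = p ^ (n + 1) := by
      rw [← pow_add]; congr 1; omega
    have hmlt : m < p ^ (n + 1 - ν) := by
      have : p ^ ν * m < p ^ ν * p ^ (n + 1 - ν) := by omega
      exact Nat.lt_of_mul_lt_mul_left this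
    have hmge : p ^ (n + 1 - ν) ≤ m + 1 := by
      have h' : p ^ ν * p ^ (n + 1 - ν) ≤ p ^ ν * (m + 1) := by
        have : p ^ ν * (m + 1) = p ^ ν * m + p ^ ν := by ring
        omega
      exact Nat.le_of_mul_le_mul_left h' (by positivity)
    have hmeq : m + 1 = p ^ (n + 1 - ν) := by omega
    have hi : i + p ^ ν = p ^ (n + 1) := by
      have : p ^ ν * (m + 1) = p ^ ν * m + p ^ ν := by ring
      rw [hmeq, hsplit] at this
      omega
    -- determine t
    have ht' : q * (t + 1) + p = p ^ (ν + 2) := by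
      have h' : p ^ 2 * i + p ^ 2 * p ^ ν = p ^ 2 * p ^ (n + 1) := by
        have : p ^ 2 * (i + p ^ ν) = p ^ 2 * i + p ^ 2 * p ^ ν := by ring
        rw [← this, hi]
      omega
    have htq : q * (t + 1) = q * (∑ s ∈ Finset.range (ν + 1), p ^ (s + 1)) := by omega
    have ht : t + 1 = ∑ s ∈ Finset.range (ν + 1), p ^ (s + 1) :=
      Nat.eq_of_mul_eq_mul_left (by omega) htq
    exact ⟨ν, hνle, by
      have := S_pos p ν (by omega)
      simp only [Prod.mk.injEq]
      constructor <;> omega⟩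
  · rintro ⟨k, hk, hq⟩
    have hkk : p ^ k < p ^ (n + 1) := Nat.pow_lt_pow_right hp.one_lt (by omega)
    obtain ⟨rfl, rfl⟩ : i = p ^ (n + 1) - p ^ k ∧
        t = (∑ s ∈ Finset.range (k + 1), p ^ (s + 1)) - 1 := by
      simpa [Prod.ext_iff] using hq
    set i := p ^ (n + 1) - p ^ k with hi
    set S := ∑ s ∈ Finset.range (k + 1), p ^ (s + 1) with hS
    have hSpos := S_pos p k (by omega)
    have hSk := S_eq q k
    rw [← hpdef] at hSk
    rw [← hS] at hSk
    -- valuation of i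
    set m := p ^ (n + 1 - k) - 1 with hm
    have hpownz : 0 < p ^ (n + 1 - k) := by positivity
    have hnk : 1 ≤ n + 1 - k := by omega
    have hsplit : p ^ k * p ^ (n + 1 - k) = p ^ (n + 1) := by
      rw [← pow_add]; congr 1; omega
    have him : i = p ^ k * m := by
      have h1 : p ^ k * (m + 1) = p ^ k * m + p ^ k := by ring
      have h2 : m + 1 = p ^ (n + 1 - k) := by omega
      rw [h2, hsplit] at h1
      omega
    have hpm : ¬ p ∣ m := by
      intro hdm
      have hd1 : p ∣ p ^ (n + 1 - k) := dvd_pow_self p (by omega)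
      have : p ∣ 1 := by
        have := Nat.dvd_sub hd1 hdm
        simpa [show p ^ (n + 1 - k) - m = 1 from by omega] using this
      have := Nat.le_of_dvd one_pos this
      omega
    have hmnz : m ≠ 0 := by
      intro h; rw [h] at him; omega
    have hν : padicValNat p i = k := by
      rw [him, padicValNat.mul (by positivity) hmnz, padicValNat.prime_pow,
        padicValNat.eq_zero_of_not_dvd hpm]
      omega
    refine ⟨by omega, ?_, ?_⟩
    · unfold L; rw [hν]; omega
    · -- the clean equation
      have heqc : p ^ 2 * i + q * ((S - 1) + 1) + p = p ^ (n + 3) := by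
        have hT : (S - 1) + 1 = S := by omega
        rw [hT]
        have hn3 : p ^ (n + 3) = p ^ 2 * p ^ (n + 1) := by ring
        have hk2 : p ^ (k + 2) = p ^ 2 * p ^ k := by ring
        have h' : p ^ 2 * i + p ^ 2 * p ^ k = p ^ 2 * p ^ (n + 1) := by
          have : p ^ 2 * (i + p ^ k) = p ^ 2 * i + p ^ 2 * p ^ k := by ring
          rw [← this, show i + p ^ k = p ^ (n + 1) from by omega]
        omega
      have h2A : 2 * p ^ 2 * i = 2 * (p ^ 2 * i) := by ring
      have h2B : 2 * (p - 1) * (S - 1) = 2 * (q * (S - 1)) := by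
        rw [show p - 1 = q from by omega]; ring
      have hmul : q * ((S - 1) + 1) = q * (S - 1) + q := by ring
      omega
end

section
/- Let p be an odd prime, n ≥ 0, 1 ≤ j ≤ p−2, and let i be an integer with (p−1)·p^n ≤ i ≤ p^{n+1} − 1. Then the binomial coefficient C(i − 1, j·p^n) is not divisible by p. -/
/-!
Write `m = i - 1 = a p^n + r` with `r < p^n`. By Lucas's theorem, `C(m, j p^n) ≡ C(a, j) (mod p)`,
since the lower `n` base-`p` digits of `j p^n` vanish. The bounds on `i` give `j ≤ a < p`, and
`C(a, j)` is prime to `p` because `a!` is.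
-/

open Finset Nat

namespace Choose

theorem choose_pow_mul_add_modEq {p n a b r : ℕ} [Fact p.Prime] (hr : r < p ^ n) :
    choose (p ^ n * a + r) (p ^ n * b) ≡ choose a b [ZMOD p] := by
  have hp : 0 < p := (Fact.out : p.Prime).pos
  have hpn : 0 < p ^ n := pow_pos hp n
  have high_digits : (p ^ n * a + r) / p ^ n = a := by
    rw [Nat.mul_add_div hpn, Nat.div_eq_of_lt hr, add_zero]
  have low_digits :
      ∀ i ∈ range n, choose ((p ^ n * a + r) / p ^ i % p) (p ^ n * b / p ^ i % p) = 1 := by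
    intro i hi
    have hin : i < n := mem_range.mp hi
    have digit_zero : p ^ n * b / p ^ i % p = 0 := by
      rw [← Nat.add_sub_cancel' hin.le, pow_add, mul_assoc,
        Nat.mul_div_cancel_left _ (pow_pos hp i)]
      exact Nat.mod_eq_zero_of_dvd ((dvd_pow_self p (by omega)).mul_right b)
    rw [digit_zero, choose_zero_right]
  simpa [high_digits, Nat.mul_div_cancel_left b hpn, prod_eq_one low_digits] using
    choose_modEq_choose_mul_prod_range_choose (n := p ^ n * a + r) (k := p ^ n * b) (p := p) n

end Choose

theorem Nat.Prime.not_dvd_choose_mul_pow {p n b m : ℕ} (hp : p.Prime) (hbm : b * p ^ n ≤ m)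
    (hm : m < p ^ (n + 1)) : ¬ p ∣ choose m (b * p ^ n) := by
  have := Fact.mk hp
  have hpn : 0 < p ^ n := pow_pos hp.pos n
  have ha : m / p ^ n < p := Nat.div_lt_of_lt_mul (by rwa [← pow_succ])
  have hb : b ≤ m / p ^ n := (Nat.le_div_iff_mul_le hpn).mpr hbm
  have hmodEq := Choose.choose_pow_mul_add_modEq (a := m / p ^ n) (b := b) (Nat.mod_lt m hpn)
  rw [Nat.div_add_mod, mul_comm (p ^ n) b] at hmodEq
  rw [← Int.natCast_dvd_natCast, hmodEq.dvd_iff, Int.natCast_dvd_natCast]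
  exact (hp.coprime_iff_not_dvd).mp (hp.coprime_choose_of_lt ha hb)

theorem stmt11_general (p n j i : ℕ) (hp : p.Prime)
    (hj2 : j ≤ p - 2)
    (hi1 : (p - 1) * p ^ n ≤ i) (hi2 : i ≤ p ^ (n + 1) - 1) :
    ¬ p ∣ Nat.choose (i - 1) (j * p ^ n) := by
  have hpn : 0 < p ^ (n + 1) := pow_pos hp.pos (n + 1)
  refine hp.not_dvd_choose_mul_pow ?_ (by omega)
  have hp2 := hp.two_le
  calc j * p ^ n ≤ (p - 2) * p ^ n := Nat.mul_le_mul_right _ hj2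
    _ ≤ (p - 1) * p ^ n - p ^ n := by
      rw [← Nat.sub_one_mul, show p - 1 - 1 = p - 2 by omega]
    _ ≤ i - 1 :=
      (Nat.sub_le_sub_right hi1 _).trans (Nat.sub_le_sub_left (Nat.one_le_pow _ _ hp.pos) i)

/-- For an odd prime `p`, `n ≥ 0`, `1 ≤ j ≤ p − 2` and
`(p−1) p^n ≤ i ≤ p^(n+1) − 1`, the binomial coefficient `C(i − 1, j p^n)` is
not divisible by `p`. -/
theorem stmt11 (p n j i : ℕ) (hp : p.Prime) (hodd : Odd p)
    (hj1 : 1 ≤ j) (hj2 : j ≤ p - 2)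
    (hi1 : (p - 1) * p ^ n ≤ i) (hi2 : i ≤ p ^ (n + 1) - 1) :
    ¬ p ∣ Nat.choose (i - 1) (j * p ^ n) :=
  stmt11_general p n j i hp hj2 hi1 hi2
end

section
/- Let p be a prime, n ≥ 1, and let m be an integer with p^n ≤ m ≤ 2p^n − 1; set k = ν_p(m). Then the binomial coefficient C(2p^n − p^k − 1, 2p^n − p^k − m) is not divisible by p. -/
/-! With `k = ν_p(m)` and `b = 2p^n - p^k - m` the coefficient is `C(b + m - 1, b)`, and
`(b + m) * C(b + m - 1, b) = m * C(b + m, b)`. Since `p^k` divides `b + m = 2p^n - p^k`, it suffices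
that `p ∤ C(b + m, b)`, i.e. (Kummer) that adding `b` and `m` in base `p` produces no carry.
Both are multiples of `p^k`, so there is none in the lowest `k` digits; modulo `p^i` with
`k < i ≤ n` the residues of `b` and `m` are multiples of `p^k` summing to `-p^k`, so their sum is
exactly `p^i - p^k < p^i`. -/

namespace Nat

theorem mod_add_mod_lt_of_dvd_add {a c d q : ℕ} (hd : 0 < d) (hdq : d ∣ q) (hda : d ∣ a)
    (hdc : d ∣ c) (hq : q ∣ a + c + d) : a % q + c % q < q := by
  have hq0 : 0 < q := Nat.pos_of_ne_zero (by rintro rfl; simp at hq; omega)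
  have mod_add_le : ∀ x, d ∣ x → x % q + d ≤ q := fun x hx => by
    have := Nat.mod_lt x hq0
    have := Nat.le_of_dvd (by omega) (Nat.dvd_sub hdq ((Nat.dvd_mod_iff hdq).2 hx))
    omega
  have hsum : a % q + c % q + d = q := by
    refine Nat.eq_of_dvd_of_lt_two_mul (by omega) ?_ ?_
    · have hdiv : a % q + c % q + d + q * (a / q + c / q) = a + c + d := by
        rw [mul_add]; linarith [Nat.mod_add_div a q, Nat.mod_add_div c q]
      exact (Nat.dvd_add_left (dvd_mul_right _ _)).1 (hdiv ▸ hq)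
    · have := mod_add_le a hda; have := mod_add_le c hdc; omega
  omega

theorem Prime.not_dvd_choose_of_mod_add_mod_lt {p a c L : ℕ} (hp : p.Prime) (hL : a + c < p ^ L)
    (h : ∀ i ∈ Finset.Ico 1 L, a % p ^ i + c % p ^ i < p ^ i) : ¬ p ∣ (a + c).choose a := by
  have := Fact.mk hp
  obtain rfl | hL0 := Nat.eq_zero_or_pos L
  · obtain rfl : a = 0 := by simp at hL; omega
    simpa using hp.ne_one
  rw [dvd_iff_padicValNat_ne_zero (Nat.choose_pos (by omega)).ne', not_not, add_comm a c,
    padicValNat_choose' (log_lt_of_lt_pow' hL0.ne' (by omega)), Finset.card_eq_zero,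
    Finset.filter_eq_empty_iff]
  exact fun i hi => not_le.2 (h i hi)

theorem Prime.not_dvd_choose_pred_of_not_dvd_choose {p a m : ℕ} (hp : p.Prime) (hm : m ≠ 0)
    (hdvd : p ^ padicValNat p m ∣ a + m) (h : ¬ p ∣ (a + m).choose a) :
    ¬ p ∣ (a + m - 1).choose a := by
  have := Fact.mk hp
  obtain ⟨m, rfl⟩ := Nat.exists_eq_succ_of_ne_zero hm
  rw [show a + (m + 1) - 1 = a + m by omega]
  intro hpC
  apply pow_succ_padicValNat_not_dvd (p := p) m.succ_ne_zero
  have hrec := Nat.choose_mul_succ_eq (a + m) a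
  rw [show a + m + 1 - a = m + 1 by omega, add_assoc] at hrec
  have : p ^ (padicValNat p (m + 1) + 1) ∣ (a + (m + 1)).choose a * (m + 1) := by
    rw [← hrec, pow_succ']
    exact mul_dvd_mul hpC hdvd
  exact (Nat.Coprime.pow_left _ ((Nat.Prime.coprime_iff_not_dvd hp).2 h)).dvd_of_dvd_mul_left this

theorem mod_pow_add_mod_pow_lt_of_dvd_add {p a c k n i : ℕ} (hp : 0 < p) (hi : i ≤ n)
    (ha : p ^ k ∣ a) (hc : p ^ k ∣ c) (hsum : p ^ n ∣ a + c + p ^ k) :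
    a % p ^ i + c % p ^ i < p ^ i := by
  rcases le_total i k with hik | hki
  · have hdvd := pow_dvd_pow p hik
    rw [Nat.mod_eq_zero_of_dvd (hdvd.trans ha), Nat.mod_eq_zero_of_dvd (hdvd.trans hc)]
    positivity
  · exact mod_add_mod_lt_of_dvd_add (by positivity) (pow_dvd_pow p hki) ha hc
      ((pow_dvd_pow p hi).trans hsum)

end Nat

theorem stmt12_general (p n m : ℕ) (hp : p.Prime)
    (hm1 : p ^ n ≤ m) (hm2 : m ≤ 2 * p ^ n - 1) :
    ¬ p ∣ Nat.choose (2 * p ^ n - p ^ padicValNat p m - 1)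
        (2 * p ^ n - p ^ padicValNat p m - m) := by
  have := Fact.mk hp
  set k := padicValNat p m
  have hm0 : m ≠ 0 := by have := pow_pos hp.pos n; omega
  have hmk : p ^ k ∣ m := pow_padicValNat_dvd
  have hpn : 2 * p ^ n ≤ p ^ (n + 1) := by
    rw [pow_succ']; exact Nat.mul_le_mul_right _ hp.two_le
  have hkn : k ≤ n :=
    (padicValNat_le_nat_log m).trans (Nat.lt_add_one_iff.1 (Nat.log_lt_of_lt_pow hm0 (by omega)))
  have hpk : 0 < p ^ k := pow_pos hp.pos k
  have hnk : p ^ k ∣ 2 * p ^ n := (pow_dvd_pow p hkn).mul_left 2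
  have hfit : m + p ^ k ≤ 2 * p ^ n := by
    have := Nat.le_of_dvd (by omega) (Nat.dvd_sub hnk hmk)
    omega
  set b := 2 * p ^ n - p ^ k - m
  have hbm : b + m + p ^ k = 2 * p ^ n := by omega
  have hbmk : p ^ k ∣ b + m := by
    rw [show b + m = 2 * p ^ n - p ^ k by omega]; exact Nat.dvd_sub hnk dvd_rfl
  rw [show 2 * p ^ n - p ^ k - 1 = b + m - 1 by omega]
  refine hp.not_dvd_choose_pred_of_not_dvd_choose hm0 hbmk ?_
  refine hp.not_dvd_choose_of_mod_add_mod_lt (L := n + 1) (by omega) fun i hi => ?_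
  have hin : i ≤ n := by simp only [Finset.mem_Ico] at hi; omega
  exact Nat.mod_pow_add_mod_pow_lt_of_dvd_add hp.pos hin ((Nat.dvd_add_left hmk).1 hbmk) hmk
    (hbm ▸ dvd_mul_left _ _)

/-- For a prime `p`, `n ≥ 1` and `p^n ≤ m ≤ 2p^n − 1`, with `k = ν_p(m)`, the
binomial coefficient `C(2p^n − p^k − 1, 2p^n − p^k − m)` is not divisible by `p`. -/
theorem stmt12 (p n m : ℕ) (hp : p.Prime) (hn : 1 ≤ n)
    (hm1 : p ^ n ≤ m) (hm2 : m ≤ 2 * p ^ n - 1) :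
    ¬ p ∣ Nat.choose (2 * p ^ n - p ^ padicValNat p m - 1)
        (2 * p ^ n - p ^ padicValNat p m - m) :=
  stmt12_general p n m hp hm1 hm2
end

section
/- Let p be a prime, n ≥ 1, and let m be an integer with p^n < m ≤ 2p^n − 1; set k = ν_p(m) and k' = ν_p(m − (p−1)·p^k). If k' ≥ k + 1, then the p-adic valuation of the binomial coefficient C(2p^n − p^{k+1} − 1, 2p^n − p^k − m) equals k' − k − 1. -/
private lemma aux_pred_mod_dvd {d m : ℕ} (hd : 0 < d) (hm : 0 < m) (h : d ∣ m) :
    (m - 1) % d = d - 1 := by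
  obtain ⟨c, rfl⟩ := h
  have hc : 0 < c := Nat.pos_of_ne_zero (by rintro rfl; simp at hm)
  have e : d * (c - 1) + d = d * c := by rw [← Nat.mul_succ]; congr 1; omega
  have h3 : d * c - 1 = d * (c - 1) + (d - 1) := by omega
  rw [h3, Nat.mul_add_mod, Nat.mod_eq_of_lt (by omega)]

private lemma aux_pred_mod {d m : ℕ} (h : m % d ≠ 0) :
    (m - 1) % d = m % d - 1 := by
  rcases Nat.eq_zero_or_pos d with rfl | hd
  · simp
  have h1 := Nat.div_add_mod m d
  have h2 : m % d < d := Nat.mod_lt _ hd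
  have h3 : m - 1 = d * (m / d) + (m % d - 1) := by omega
  rw [h3, Nat.mul_add_mod, Nat.mod_eq_of_lt (by omega)]

private lemma aux_mod_of_dvd_add {P N c : ℕ} (h : P ∣ N + c) (hc : 0 < c) (hcP : c ≤ P) :
    N % P = P - c := by
  obtain ⟨q, hq⟩ := h
  have hq1 : q ≠ 0 := by rintro rfl; simp at hq; omega
  have e : P * (q - 1) + P = P * q := by rw [← Nat.mul_succ]; congr 1; omega
  have h3 : N = P * (q - 1) + (P - c) := by omega
  rw [h3, Nat.mul_add_mod, Nat.mod_eq_of_lt (by omega)]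

/-- For a prime `p`, `n ≥ 1` and `p^n < m ≤ 2p^n − 1`, with `k = ν_p(m)` and
`k' = ν_p(m − (p−1)p^k)`, if `k' ≥ k + 1` then the `p`-adic valuation of
`C(2p^n − p^(k+1) − 1, 2p^n − p^k − m)` equals `k' − k − 1`. -/
theorem stmt13 (p n m : ℕ) (hp : p.Prime) (hn : 1 ≤ n)
    (hm1 : p ^ n < m) (hm2 : m ≤ 2 * p ^ n - 1) :
    padicValNat p m + 1 ≤ padicValNat p (m - (p - 1) * p ^ padicValNat p m) →
    padicValNat p (Nat.choose (2 * p ^ n - p ^ (padicValNat p m + 1) - 1)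
        (2 * p ^ n - p ^ padicValNat p m - m)) =
      padicValNat p (m - (p - 1) * p ^ padicValNat p m) - padicValNat p m - 1 := by
  intro h
  haveI : Fact p.Prime := ⟨hp⟩
  have hp1 : 1 < p := hp.one_lt
  set k := padicValNat p m with hkdef
  set m' := m - (p - 1) * p ^ k with hm'def
  set k' := padicValNat p m' with hk'def
  have hpn_pos : 0 < p ^ n := pow_pos hp.pos n
  have hm0 : 0 < m := by omega
  have hpk : p ^ k ∣ m := pow_padicValNat_dvd
  have hpk_pos : 0 < p ^ k := pow_pos hp.pos k
  -- k < n
  have hkn : k < n := by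
    by_contra hc
    push_neg at hc
    obtain ⟨c, hceq⟩ := (pow_dvd_pow p hc).trans hpk
    have hc2 : 2 ≤ c := by
      rcases c with _ | _ | c <;> omega
    have : 2 * p ^ n ≤ p ^ n * c := by
      calc 2 * p ^ n = p ^ n * 2 := by ring
        _ ≤ p ^ n * c := Nat.mul_le_mul_left _ hc2
    omega
  have e1 : (p - 1) * p ^ k + p ^ k = p ^ (k + 1) := by
    have hpp : p - 1 + 1 = p := by omega
    calc (p - 1) * p ^ k + p ^ k = (p - 1 + 1) * p ^ k := by ring
      _ = p ^ (k + 1) := by rw [hpp, pow_succ]; ring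
  have hpk1n : p ^ (k + 1) ≤ p ^ n := Nat.pow_le_pow_right hp.pos hkn
  have hm'pos : 0 < m' := by omega
  have hpk' : p ^ k' ∣ m' := pow_padicValNat_dvd
  have h2pn : 2 * p ^ n ≤ p ^ (n + 1) := by
    calc 2 * p ^ n = p ^ n * 2 := by ring
      _ ≤ p ^ n * p := Nat.mul_le_mul_left _ hp1
      _ = p ^ (n + 1) := (pow_succ p n).symm
  have hk'n : k' ≤ n := by
    by_contra hc
    push_neg at hc
    have hle : p ^ (n + 1) ≤ m' := Nat.le_of_dvd hm'pos ((pow_dvd_pow p hc).trans hpk')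
    omega
  -- m + p^k ≤ 2 p^n
  have hm2pn : m + p ^ k ≤ 2 * p ^ n := by
    have hd : p ^ k ∣ 2 * p ^ n - m := Nat.dvd_sub (Dvd.dvd.mul_left (pow_dvd_pow p hkn.le) 2) hpk
    have hpos : 0 < 2 * p ^ n - m := by omega
    have := Nat.le_of_dvd hpos hd
    omega
  set a := 2 * p ^ n - p ^ k - m with hadef
  have heq : a + m' + p ^ (k + 1) = 2 * p ^ n := by omega
  have hdvd2pn : ∀ i, i ≤ n → p ^ i ∣ 2 * p ^ n := fun i hi => (pow_dvd_pow p hi).mul_left 2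
  have hpk1a : p ^ (k + 1) ∣ a := by
    have h1 : p ^ (k + 1) ∣ m' := (pow_dvd_pow p h).trans hpk'
    have h2 : p ^ (k + 1) ∣ 2 * p ^ n := hdvd2pn _ hkn
    have h3 : a = 2 * p ^ n - m' - p ^ (k + 1) := by omega
    rw [h3]
    exact Nat.dvd_sub (Nat.dvd_sub h2 h1) dvd_rfl
  have hNa : (2 * p ^ n - p ^ (k + 1) - 1) - a = m' - 1 := by omega
  have haN : a ≤ 2 * p ^ n - p ^ (k + 1) - 1 := by omega
  -- the three case analyses on i
  have cond_true : ∀ i, k + 2 ≤ i → i ≤ k' → p ^ i ≤ a % p ^ i + (m' - 1) % p ^ i := by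
    intro i h1 h2
    have hin : i ≤ n := h2.trans hk'n
    have hPpos : 0 < p ^ i := pow_pos hp.pos i
    have hB : (m' - 1) % p ^ i = p ^ i - 1 :=
      aux_pred_mod_dvd hPpos hm'pos ((pow_dvd_pow p h2).trans hpk')
    have hA : a % p ^ i ≠ 0 := by
      intro h0
      have hia : p ^ i ∣ a := Nat.dvd_of_mod_eq_zero h0
      have h1a : p ^ (k + 2) ∣ a := (pow_dvd_pow p h1).trans hia
      have h2a : p ^ (k + 2) ∣ m' := (pow_dvd_pow p (h1.trans h2)).trans hpk'
      have h3a : p ^ (k + 2) ∣ 2 * p ^ n := hdvd2pn _ (h1.trans hin)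
      have h4 : p ^ (k + 2) ∣ p ^ (k + 1) := by
        have h5 : p ^ (k + 1) = 2 * p ^ n - a - m' := by omega
        rw [h5]
        exact Nat.dvd_sub (Nat.dvd_sub h3a h1a) h2a
      have h6 := Nat.le_of_dvd (pow_pos hp.pos (k + 1)) h4
      have h7 : p ^ (k + 1) < p ^ (k + 2) := Nat.pow_lt_pow_right hp1 (by omega)
      omega
    generalize hg : p ^ i = P at hB hA hPpos ⊢
    omega
  have cond_false_low : ∀ i, i ≤ k + 1 → ¬ p ^ i ≤ a % p ^ i + (m' - 1) % p ^ i := by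
    intro i hi
    have hPpos : 0 < p ^ i := pow_pos hp.pos i
    have hA : p ^ i ∣ a := (pow_dvd_pow p hi).trans hpk1a
    have hA' : a % p ^ i = 0 := Nat.mod_eq_zero_of_dvd hA
    have hB : (m' - 1) % p ^ i = p ^ i - 1 :=
      aux_pred_mod_dvd hPpos hm'pos ((pow_dvd_pow p (hi.trans h)).trans hpk')
    generalize hg : p ^ i = P at hA' hB hPpos ⊢
    omega
  have cond_false_high : ∀ i, k' < i → i ≤ n → ¬ p ^ i ≤ a % p ^ i + (m' - 1) % p ^ i := by
    intro i hik' hin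
    have hPpos : 0 < p ^ i := pow_pos hp.pos i
    have hPdvd : p ^ i ∣ 2 * p ^ n := hdvd2pn _ hin
    have hr0 : m' % p ^ i ≠ 0 := by
      intro h0
      exact pow_succ_padicValNat_not_dvd hm'pos.ne'
        ((pow_dvd_pow p hik').trans (Nat.dvd_of_mod_eq_zero h0))
    have hrk' : p ^ k' ∣ m' % p ^ i := (Nat.dvd_mod_iff (pow_dvd_pow p hik'.le)).mpr hpk'
    have hrle : m' % p ^ i ≤ p ^ i - p ^ k' := by
      have h1 : p ^ k' ∣ p ^ i - m' % p ^ i :=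
        Nat.dvd_sub (pow_dvd_pow p hik'.le) hrk'
      have h2 : m' % p ^ i < p ^ i := Nat.mod_lt _ hPpos
      have h3 := Nat.le_of_dvd (by omega) h1
      omega
    have hB : (m' - 1) % p ^ i = m' % p ^ i - 1 := aux_pred_mod hr0
    have hpk1P : p ^ (k + 1) < p ^ i := Nat.pow_lt_pow_right hp1 (by omega)
    have hNmod : (a + (m' - 1)) % p ^ i = p ^ i - (p ^ (k + 1) + 1) := by
      apply aux_mod_of_dvd_add (c := p ^ (k + 1) + 1)
      · have h5 : a + (m' - 1) + (p ^ (k + 1) + 1) = 2 * p ^ n := by omega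
        rw [h5]; exact hPdvd
      · omega
      · omega
    intro hcond
    have hABmod : (a % p ^ i + (m' - 1) % p ^ i) % p ^ i = (a + (m' - 1)) % p ^ i :=
      (Nat.add_mod _ _ _).symm
    have hAlt : a % p ^ i < p ^ i := Nat.mod_lt _ hPpos
    have hBlt : (m' - 1) % p ^ i < p ^ i := Nat.mod_lt _ hPpos
    have hsub : (a % p ^ i + (m' - 1) % p ^ i) % p ^ i
        = a % p ^ i + (m' - 1) % p ^ i - p ^ i := by
      rw [Nat.mod_eq_sub_mod hcond, Nat.mod_eq_of_lt (by omega)]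
    have hk'k : p ^ (k + 1) ≤ p ^ k' := Nat.pow_le_pow_right hp.pos h
    generalize hg : p ^ i = P at hrle hB hNmod hcond hABmod hAlt hBlt hsub hPpos hpk1P
    omega
  -- Kummer
  have hlog : Nat.log p (2 * p ^ n - p ^ (k + 1) - 1) < n + 1 := by
    rcases Nat.eq_zero_or_pos (2 * p ^ n - p ^ (k + 1) - 1) with h0 | h0
    · rw [h0]; simp
    · exact Nat.log_lt_of_lt_pow h0.ne' (by omega)
  rw [padicValNat_choose haN hlog]
  simp only [hNa]
  have hset : ((Finset.Ico 1 (n + 1)).filter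
      fun i => p ^ i ≤ a % p ^ i + (m' - 1) % p ^ i) = Finset.Ico (k + 2) (k' + 1) := by
    ext i
    simp only [Finset.mem_filter, Finset.mem_Ico]
    constructor
    · rintro ⟨⟨hi1, hi2⟩, hcond⟩
      constructor
      · by_contra hc
        exact cond_false_low i (by omega) hcond
      · by_contra hc
        exact cond_false_high i (by omega) (by omega) hcond
    · rintro ⟨hi1, hi2⟩
      exact ⟨⟨by omega, by omega⟩, cond_true i hi1 (by omega)⟩
  rw [hset, Nat.card_Ico]
  omega
end

section
/- Fix a prime p and n ∈ ℕ, and let T_n be the presented R-module described below. Then for every word w on the alphabet {0, 1, …, p−1} with length |w| ≤ n, one has v^{e(w)} · g_w = 0 in T_n, where e(w) = p + p² + ⋯ + p^{n−|w|+1} (a sum of n−|w|+1 terms). -/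
open Polynomial Finsupp

noncomputable section

/-- The ideal `(p) ⊆ ℤ` is prime when `p` is a natural prime. -/
instance spanNatPrimeInt (p : ℕ) [hp : Fact p.Prime] :
    (Ideal.span {(p : ℤ)}).IsPrime := by
  rw [Ideal.span_singleton_prime (by exact_mod_cast hp.out.ne_zero)]
  exact Int.prime_iff_natAbs_prime.2 (by simpa using hp.out)

/-- Words on the alphabet `{0, 1, …, p−1}`. -/
abbrev Word (p : ℕ) : Type := List (Fin p)

/-- The letter `p − 1`. -/
def lastLetter (p : ℕ) [hp : Fact p.Prime] : Fin p :=
  ⟨p - 1, by have := hp.out.pos; omega⟩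

/-- The letter `0`. -/
def zeroLetter (p : ℕ) [hp : Fact p.Prime] : Fin p := ⟨0, hp.out.pos⟩

/-- The defining relations of the module `T_n` over `R = Zp[v]` (with `v = X`):
(i) `g_w` for every word `w` with `|w| > n`; and
(ii) for every `w` with `|w| ≤ n+1`, the element
`p·g_w − v^(p^(n−|w|+2))·g_{w'} − g_{w·0}` if `w = w'·(p−1)` ends in `p−1`
(equivalently, for every `w'` with `|w'| ≤ n`, taking `w = w'·(p−1)` of length
`|w'|+1`, so that `n−|w|+2 = n+1−|w'|`), and `p·g_w − g_{w·0}` otherwise. -/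
def rels (p : ℕ) [Fact p.Prime] (Zp : Type) [CommRing Zp] (n : ℕ) :
    Set (Word p →₀ Polynomial Zp) :=
  {x | ∃ w : Word p, n < w.length ∧ x = single w 1} ∪
  {x | ∃ w' : Word p, w'.length ≤ n ∧
      x = single (w' ++ [lastLetter p]) (p : Polynomial Zp)
        - single w' (X ^ p ^ (n + 1 - w'.length))
        - single ((w' ++ [lastLetter p]) ++ [zeroLetter p]) 1} ∪
  {x | ∃ w : Word p, w.length ≤ n + 1 ∧ (∀ w' : Word p, w ≠ w' ++ [lastLetter p]) ∧
      x = single w (p : Polynomial Zp) - single (w ++ [zeroLetter p]) 1}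

/-- The torsion module `T_n` of Angeltveit–Hill–Lawson: the quotient of the
free `Zp[v]`-module on the words `{g_w : w ∈ W}` by the relations `rels`. -/
abbrev T (p : ℕ) [Fact p.Prime] (Zp : Type) [CommRing Zp] (n : ℕ) : Type :=
  (Word p →₀ Polynomial Zp) ⧸ Submodule.span (Polynomial Zp) (rels p Zp n)

/-- The generator `g_w` of `T_n`. -/
def g (p : ℕ) [Fact p.Prime] (Zp : Type) [CommRing Zp] (n : ℕ) (w : Word p) :
    T p Zp n :=
  Submodule.Quotient.mk (single w (1 : Polynomial Zp))

lemma g_zero' (p : ℕ) [Fact p.Prime] (Zp : Type) [CommRing Zp] (n : ℕ)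
    (w : Word p) (hw : n < w.length) : g p Zp n w = 0 := by
  rw [g, Submodule.Quotient.mk_eq_zero]
  exact Submodule.subset_span (Or.inl (Or.inl ⟨w, hw, rfl⟩))

lemma g_rel' (p : ℕ) [Fact p.Prime] (Zp : Type) [CommRing Zp] (n : ℕ)
    (w : Word p) (hw : w.length ≤ n) :
    (X : Polynomial Zp) ^ p ^ (n + 1 - w.length) • g p Zp n w
      = (p : Polynomial Zp) • g p Zp n (w ++ [lastLetter p])
        - g p Zp n ((w ++ [lastLetter p]) ++ [zeroLetter p]) := by
  unfold g
  rw [← Submodule.Quotient.mk_smul, ← Submodule.Quotient.mk_smul,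
    ← Submodule.Quotient.mk_sub, Submodule.Quotient.eq]
  have hmem : (single (w ++ [lastLetter p]) (p : Polynomial Zp)
      - single w (X ^ p ^ (n + 1 - w.length))
      - single ((w ++ [lastLetter p]) ++ [zeroLetter p]) 1 :
        Word p →₀ Polynomial Zp)
      ∈ Submodule.span (Polynomial Zp) (rels p Zp n) :=
    Submodule.subset_span (Or.inl (Or.inr ⟨w, hw, rfl⟩))
  have := (Submodule.span (Polynomial Zp) (rels p Zp n)).neg_mem hmem
  convert this using 1
  simp only [Finsupp.smul_single, smul_eq_mul, mul_one]
  abel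

lemma key' (p : ℕ) [Fact p.Prime] (Zp : Type) [CommRing Zp] (n : ℕ) :
    ∀ j : ℕ, ∀ w : Word p, n ≤ w.length + j →
      ((X : Polynomial Zp) ^ (∑ t ∈ Finset.range (j + 1), p ^ (t + 1))) •
        g p Zp n w = 0 := by
  intro j
  induction j with
  | zero =>
    intro w hw
    rcases lt_or_eq_of_le hw with h | h
    · rw [g_zero' p Zp n w (by omega), smul_zero]
    · have hr := g_rel' p Zp n w (le_of_eq h.symm)
      have h1 : n + 1 - w.length = 1 := by omega
      rw [h1, pow_one] at hr
      simp only [Finset.range_one, Finset.sum_singleton, zero_add, pow_one]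
      rw [hr, g_zero' p Zp n _ (by simp; omega), g_zero' p Zp n _ (by simp; omega),
        smul_zero, sub_zero]
  | succ j ih =>
    intro w hw
    rw [Finset.sum_range_succ, pow_add, mul_comm, mul_smul]
    by_cases h : n ≤ w.length + j
    · rw [ih w h, smul_zero]
    · have hlen : w.length + (j + 1) = n := by omega
      have hr := g_rel' p Zp n w (by omega)
      have h1 : n + 1 - w.length = j + 1 + 1 := by omega
      rw [h1] at hr
      rw [smul_comm, hr, smul_sub, ih _ (by simp; omega), sub_zero,
        smul_comm, ih _ (by simp; omega), smul_zero]

/-- For any realization `Zp` of `ℤ_(p)` and any word `w` with `|w| ≤ n`, the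
relations of `T_n` imply `v^(p + p² + ⋯ + p^(n−|w|+1)) · g_w = 0`. -/
theorem stmt15 (p : ℕ) [Fact p.Prime] (Zp : Type) [CommRing Zp] [Algebra ℤ Zp]
    [IsLocalization.AtPrime Zp (Ideal.span {(p : ℤ)})] (n : ℕ) :
    ∀ w : Word p, w.length ≤ n →
      ((X : Polynomial Zp) ^ (∑ t ∈ Finset.range (n - w.length + 1), p ^ (t + 1))) •
        g p Zp n w = 0 := by
  intro w hw
  exact key' p Zp n (n - w.length) w (by omega)

end
end

section
/- Fix a prime p and n ∈ ℕ, and let T_n be the presented R-module described below. Then T_n is a finite module, i.e. its underlying set has only finitely many elements. -/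
open Polynomial Finsupp

noncomputable section

/-! Every generator `g_w` is killed by a power of `v`, by downward induction on `|w|`: the
relation attached to `w·(p−1)` writes `v^(p^(n+1−|w|)) g_w` as `p g_{w·(p−1)} − g_{w·(p−1)·0}`.
The same relations give `p^(n+1) T_n ⊆ v T_n`, so a power of `p` kills `T_n` as well. Hence
`T_n` is a `ℤ_(p)`-module spanned by the finitely many nonzero `v^j g_w` and killed by `p^K`;
as `ℤ → ℤ_(p)/p^K` is onto, `ℤ_(p)` acts through integers, and `T_n` is a finitely generated
torsion abelian group. -/

open Pointwise

section LocalizationAtPrime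

variable {p : ℕ} [Fact p.Prime] {S : Type*} [CommRing S] [Algebra ℤ S]
  [IsLocalization.AtPrime S (Ideal.span {(p : ℤ)})]

variable (p) in
theorem exists_intCast_add_mul_pow (K : ℕ) (c : S) :
    ∃ (z : ℤ) (y : S), c = z + y * (p : S) ^ K := by
  obtain ⟨⟨a, s⟩, hs⟩ := IsLocalization.surj (Ideal.span {(p : ℤ)}).primeCompl c
  simp only [eq_intCast] at hs
  have hp : Prime (p : ℤ) := Nat.prime_iff_prime_int.1 Fact.out
  obtain ⟨u, v, huv⟩ : IsCoprime (s : ℤ) ((p : ℤ) ^ K) :=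
    ((hp.coprime_iff_not_dvd.2 fun h ↦ s.2 (Ideal.mem_span_singleton.2 h)).symm).pow_right
  refine ⟨u * a, c * v, ?_⟩
  calc c = c * ((u * s + v * (p : ℤ) ^ K : ℤ) : S) := by rw [huv, Int.cast_one, mul_one]
    _ = _ := by push_cast; linear_combination u * hs

variable {M : Type*} [AddCommGroup M] [Module S M]

theorem exists_int_smul_eq_of_isTorsionBy {K : ℕ} (hM : Module.IsTorsionBy S M ((p : S) ^ K))
    (c : S) : ∃ z : ℤ, ∀ m : M, c • m = z • m := by
  obtain ⟨z, y, rfl⟩ := exists_intCast_add_mul_pow p K c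
  exact ⟨z, fun m ↦ by rw [add_smul, mul_smul, hM, smul_zero, add_zero, Int.cast_smul_eq_zsmul]⟩

theorem finite_of_isTorsionBy_pow [Module.Finite S M] {K : ℕ}
    (hM : Module.IsTorsionBy S M ((p : S) ^ K)) : Finite M := by
  obtain ⟨s, hs⟩ := Module.Finite.fg_top (R := S) (M := M)
  have : Module.Finite ℤ M := by
    refine ⟨⟨s, Submodule.eq_top_iff'.2 fun m ↦ ?_⟩⟩
    induction (hs ▸ Submodule.mem_top : m ∈ Submodule.span S s) using Submodule.span_induction with
    | mem x hx => exact Submodule.subset_span hx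
    | zero => exact zero_mem _
    | add x y _ _ hx hy => exact add_mem hx hy
    | smul c x _ hx =>
      obtain ⟨z, hz⟩ := exists_int_smul_eq_of_isTorsionBy hM c
      rw [hz]
      exact Submodule.smul_mem _ z hx
  have hpK : ((p : ℤ) ^ K) ∈ nonZeroDivisors ℤ :=
    mem_nonZeroDivisors_of_ne_zero (pow_ne_zero _ (by exact_mod_cast (Fact.out : p.Prime).ne_zero))
  refine Module.finite_of_fg_torsion M fun m ↦ ⟨⟨_, hpK⟩, ?_⟩
  change ((p : ℤ) ^ K) • m = 0
  rw [← Int.cast_smul_eq_zsmul S, Int.cast_pow, Int.cast_natCast]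
  exact hM (x := m)

end LocalizationAtPrime

section PowerDivisibility

variable {R M : Type*} [CommRing R] [AddCommGroup M] [Module R M]

theorem smul_mem_of_forall_mem_of_span_eq_top {s : Set M} (hs : Submodule.span R s = ⊤)
    {N : Submodule R M} {a : R} (h : ∀ x ∈ s, a • x ∈ N) (m : M) : a • m ∈ N :=
  (Submodule.span_le (p := N.comap (a • LinearMap.id)).2 fun x hx ↦ Submodule.mem_comap.2 (h x hx))
    (hs ▸ Submodule.mem_top)

theorem isTorsionBy_pow_of_smul_mem {a b : R} {N : ℕ}
    (hab : ∀ m : M, a • m ∈ b • (⊤ : Submodule R M)) (hb : Module.IsTorsionBy R M (b ^ N)) :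
    Module.IsTorsionBy R M (a ^ N) := by
  have hpow : ∀ (t : ℕ) (m : M), ∃ m', a ^ t • m = b ^ t • m' := by
    intro t
    induction t with
    | zero => exact fun m ↦ ⟨m, by simp⟩
    | succ t ih =>
      intro m
      obtain ⟨m₁, -, hm₁⟩ := (Submodule.mem_smul_pointwise_iff_exists _ _ _).1 (hab m)
      obtain ⟨m₂, hm₂⟩ := ih m₁
      refine ⟨m₂, ?_⟩
      rw [pow_succ, mul_smul, ← hm₁, smul_comm, hm₂, smul_smul, ← pow_succ']
  intro m
  obtain ⟨m', hm'⟩ := hpow N m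
  rw [hm', hb]

end PowerDivisibility

section TorsionModule

variable (p : ℕ) [Fact p.Prime] (Zp : Type) [CommRing Zp] (n : ℕ)

theorem mk_single_eq_smul_g (w : Word p) (q : Zp[X]) :
    (Submodule.Quotient.mk (single w q) : T p Zp n) = q • g p Zp n w := by
  rw [g, ← Submodule.Quotient.mk_smul, smul_single_one]

theorem mk_eq_zero_of_mem_rels {x : Word p →₀ Zp[X]} (hx : x ∈ rels p Zp n) :
    (Submodule.Quotient.mk x : T p Zp n) = 0 :=
  (Submodule.Quotient.mk_eq_zero _).2 (Submodule.subset_span hx)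

theorem g_eq_zero {w : Word p} (hw : n < w.length) : g p Zp n w = 0 :=
  mk_eq_zero_of_mem_rels p Zp n (Or.inl (Or.inl ⟨w, hw, rfl⟩))

theorem p_smul_g_append_lastLetter {w : Word p} (hw : w.length ≤ n) :
    (p : Zp[X]) • g p Zp n (w ++ [lastLetter p]) =
      (X : Zp[X]) ^ p ^ (n + 1 - w.length) • g p Zp n w
        + g p Zp n (w ++ [lastLetter p] ++ [zeroLetter p]) := by
  have h := mk_eq_zero_of_mem_rels p Zp n (Or.inl (Or.inr ⟨w, hw, rfl⟩))
  rwa [Submodule.Quotient.mk_sub, Submodule.Quotient.mk_sub, mk_single_eq_smul_g,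
    mk_single_eq_smul_g, sub_sub, sub_eq_zero] at h

theorem p_smul_g_of_ne_append_lastLetter {w : Word p} (hw : w.length ≤ n + 1)
    (hlast : ∀ w' : Word p, w ≠ w' ++ [lastLetter p]) :
    (p : Zp[X]) • g p Zp n w = g p Zp n (w ++ [zeroLetter p]) := by
  have h := mk_eq_zero_of_mem_rels p Zp n (Or.inr ⟨w, hw, hlast, rfl⟩)
  rwa [Submodule.Quotient.mk_sub, mk_single_eq_smul_g, sub_eq_zero] at h

theorem span_range_g : Submodule.span Zp[X] (Set.range (g p Zp n)) = ⊤ := by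
  have hr : Set.range (g p Zp n) = (Submodule.span Zp[X] (rels p Zp n)).mkQ ''
      Set.range fun w : Word p ↦ single w (1 : Zp[X]) := by
    rw [← Set.range_comp]; rfl
  rw [hr, Submodule.span_image, ← Finsupp.coe_basisSingleOne, Module.Basis.span_eq,
    Submodule.map_top, Submodule.range_mkQ]

theorem X_pow_pow_pow_smul_g_eq_zero (d : ℕ) :
    ∀ w : Word p, n < w.length + d → ((X : Zp[X]) ^ p ^ (n + 1)) ^ d • g p Zp n w = 0 := by
  induction d with
  | zero => intro w hw; rw [g_eq_zero p Zp n (by omega), smul_zero]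
  | succ d ih =>
    intro w hw
    rcases lt_or_ge n w.length with hlen | hlen
    · rw [g_eq_zero p Zp n hlen, smul_zero]
    set e := p ^ (n + 1 - w.length)
    have he : e ≤ p ^ (n + 1) := Nat.pow_le_pow_right (Fact.out : p.Prime).pos (by omega)
    have hX : ((X : Zp[X]) ^ p ^ (n + 1)) ^ (d + 1) =
        X ^ (p ^ (n + 1) - e) * ((X ^ p ^ (n + 1)) ^ d * X ^ e) := by
      rw [pow_succ, mul_left_comm, ← pow_add, Nat.sub_add_cancel he]
    have hrel : (X : Zp[X]) ^ e • g p Zp n w = (p : Zp[X]) • g p Zp n (w ++ [lastLetter p])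
        - g p Zp n (w ++ [lastLetter p] ++ [zeroLetter p]) := by
      rw [p_smul_g_append_lastLetter p Zp n hlen, add_sub_cancel_right]
    rw [hX, mul_smul, mul_smul, hrel, smul_sub, smul_comm _ (p : Zp[X]),
      ih _ (by simp; omega), ih _ (by simp; omega), smul_zero, sub_zero, smul_zero]

theorem p_pow_smul_g_mem_X_smul_top (d : ℕ) : ∀ w : Word p, n < w.length + d →
    (p : Zp[X]) ^ d • g p Zp n w ∈ (X : Zp[X]) • (⊤ : Submodule Zp[X] (T p Zp n)) := by
  induction d with
  | zero => intro w hw; rw [g_eq_zero p Zp n (by omega), smul_zero]; exact zero_mem _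
  | succ d ih =>
    intro w hw
    rcases lt_or_ge n w.length with hlen | hlen
    · rw [g_eq_zero p Zp n hlen, smul_zero]; exact zero_mem _
    rw [pow_succ, mul_smul]
    by_cases hlast : ∃ w' : Word p, w = w' ++ [lastLetter p]
    · obtain ⟨w', rfl⟩ := hlast
      simp only [List.length_append, List.length_singleton] at hw hlen
      obtain ⟨e, he⟩ : ∃ e, p ^ (n + 1 - w'.length) = e + 1 :=
        Nat.exists_eq_add_one.2 (Nat.pow_pos (Fact.out : p.Prime).pos)
      rw [p_smul_g_append_lastLetter p Zp n (by omega), he, pow_succ', mul_smul, smul_add,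
        smul_comm _ (X : Zp[X])]
      exact add_mem (Submodule.smul_mem_pointwise_smul _ _ _ Submodule.mem_top)
        (ih _ (by simp; omega))
    · rw [p_smul_g_of_ne_append_lastLetter p Zp n (by omega) (not_exists.1 hlast)]
      exact ih _ (by simp; omega)

theorem isTorsionBy_X_pow :
    Module.IsTorsionBy Zp[X] (T p Zp n) ((X : Zp[X]) ^ (p ^ (n + 1) * (n + 1))) := by
  intro m
  rw [pow_mul]
  refine (Submodule.mem_bot Zp[X]).1
    (smul_mem_of_forall_mem_of_span_eq_top (span_range_g p Zp n) ?_ m)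
  rintro _ ⟨w, rfl⟩
  exact X_pow_pow_pow_smul_g_eq_zero p Zp n (n + 1) w (by omega)

theorem isTorsionBy_p_pow :
    Module.IsTorsionBy Zp[X] (T p Zp n) (((p : Zp[X]) ^ (n + 1)) ^ (p ^ (n + 1) * (n + 1))) := by
  refine isTorsionBy_pow_of_smul_mem (fun m ↦ ?_) (isTorsionBy_X_pow p Zp n)
  refine smul_mem_of_forall_mem_of_span_eq_top (span_range_g p Zp n) ?_ m
  rintro _ ⟨w, rfl⟩
  exact p_pow_smul_g_mem_X_smul_top p Zp n (n + 1) w (by omega)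

theorem span_X_pow_smul_g :
    Submodule.span Zp (Set.range (fun j : ℕ ↦ (X : Zp[X]) ^ j) • Set.range (g p Zp n)) = ⊤ := by
  have hX : Submodule.span Zp (Set.range fun j : ℕ ↦ (X : Zp[X]) ^ j) = ⊤ := by
    simp [← coe_basisMonomials, X_pow_eq_monomial]
  rw [Submodule.span_smul_of_span_eq_top hX, span_range_g, Submodule.restrictScalars_top]

theorem finite_X_pow_smul_g :
    (Set.range (fun j : ℕ ↦ (X : Zp[X]) ^ j) • Set.range (g p Zp n)).Finite := by
  refine ((Set.finite_Iio (p ^ (n + 1) * (n + 1))).image2 (fun j w ↦ (X : Zp[X]) ^ j • g p Zp n w)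
    (List.finite_length_le (Fin p) n)).insert 0 |>.subset ?_
  rintro _ ⟨_, ⟨j, rfl⟩, _, ⟨w, rfl⟩, rfl⟩
  rcases lt_or_ge n w.length with hw | hw
  · simp [g_eq_zero p Zp n hw]
  rcases lt_or_ge j (p ^ (n + 1) * (n + 1)) with hj | hj
  · exact Or.inr ⟨j, hj, w, hw, rfl⟩
  · left
    change (X : Zp[X]) ^ j • g p Zp n w = 0
    rw [← Nat.sub_add_cancel hj, pow_add, mul_smul, isTorsionBy_X_pow, smul_zero]

instance : Module.Finite Zp (T p Zp n) :=
  ⟨⟨(finite_X_pow_smul_g p Zp n).toFinset, by simpa using span_X_pow_smul_g p Zp n⟩⟩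

end TorsionModule

/-- For any realization `Zp` of `ℤ_(p)`, the module `T_n` has only finitely
many elements. -/
theorem stmt16 (p : ℕ) [Fact p.Prime] (Zp : Type) [CommRing Zp] [Algebra ℤ Zp]
    [IsLocalization.AtPrime Zp (Ideal.span {(p : ℤ)})] (n : ℕ) :
    Finite (T p Zp n) := by
  have hp : Module.IsTorsionBy Zp (T p Zp n) ((p : Zp) ^ ((n + 1) * (p ^ (n + 1) * (n + 1)))) := by
    intro m
    rw [← algebraMap_smul Zp[X], map_pow, map_natCast, pow_mul]
    exact isTorsionBy_p_pow p Zp n (x := m)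
  exact finite_of_isTorsionBy_pow hp
end
end

section
/- Fix a prime p and n ≥ 1, and let T_{n−1} and T_n be the presented R-modules described below. Then: (1) for each letter a with 0 ≤ a ≤ p−2, the assignment g_w ↦ g_{a·w} (prepending the letter a) induces a well-defined injective R-module homomorphism T_{n−1} → T_n; (2) for 1 ≤ a ≤ p−2 the image of this homomorphism is a direct summand of T_n; and (3) the assignment sending g_{(p−1)·w} ↦ g_w for words beginning with the letter p−1 and g_u ↦ 0 for words u not beginning with p−1 induces a well-defined surjective R-module homomorphism T_n → T_{n−1}. -/
open Polynomial Finsupp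

noncomputable section

/-!
All maps come from the universal property of the presentation (`T.lift`): one only checks the
three families of relations on the images of the generators. For `a ≠ 0`, stripping a leading
letter `a` is a retraction of prepending `a`, which gives injectivity and a complement; stripping
`p − 1` hits every generator, so it is surjective. For `a = 0` stripping is not well defined
(the relation `p·g_∅ = g_0` would force `g_∅ = 0` in `T_{n−1}`), so one strips instead into
`T_{n−1}` with a formal solution `t` of `p·t = g_∅`, `v^(p^(n+1))·t = 0` adjoined. `T_{n−1}`
embeds there because `v^(p^(n+1))` already kills `g_∅` in `T_{n−1}` and `p` is a nonzerodivisor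
of `ℤ_(p)`.
-/

/-- `M` with a new element `t` adjoined, subject to `r • t = m` and `s • t = 0`. -/
abbrev AdjoinSolution {R M : Type*} [CommRing R] [AddCommGroup M] [Module R M]
    (m : M) (r s : R) : Type _ :=
  (M × R) ⧸ Submodule.span R {((m, -r) : M × R), (0, s)}

namespace AdjoinSolution

variable {R M : Type*} [CommRing R] [AddCommGroup M] [Module R M] {m : M} {r s : R}

def inl : M →ₗ[R] AdjoinSolution m r s := (Submodule.mkQ _).comp (LinearMap.inl R M R)

def sol : AdjoinSolution m r s := Submodule.Quotient.mk (0, 1)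

lemma smul_sol_left : r • (sol : AdjoinSolution m r s) = inl m := by
  rw [sol, inl, ← Submodule.Quotient.mk_smul, LinearMap.comp_apply, LinearMap.inl_apply,
    Submodule.mkQ_apply, Submodule.Quotient.eq]
  have h : r • ((0 : M), (1 : R)) - (m, 0) = -(m, -r) := by ext <;> simp
  exact h ▸ neg_mem (Submodule.subset_span (by simp))

lemma smul_sol_right : s • (sol : AdjoinSolution m r s) = 0 := by
  rw [sol, ← Submodule.Quotient.mk_smul, Submodule.Quotient.mk_eq_zero]
  have h : s • ((0 : M), (1 : R)) = (0, s) := by ext <;> simp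
  exact h ▸ Submodule.subset_span (by simp)

lemma inl_injective (h : ∀ a : R, s ∣ a * r → a • m = 0) :
    Function.Injective (inl : M →ₗ[R] AdjoinSolution m r s) := by
  refine (injective_iff_map_eq_zero _).2 fun z hz => ?_
  obtain ⟨a, b, hab⟩ := Submodule.mem_span_pair.1 ((Submodule.Quotient.mk_eq_zero _).1 hz)
  have hfst : a • m = z := by simpa using congrArg Prod.fst hab
  have hsnd : a * r = s * b := by
    have := congrArg Prod.snd hab
    simp only [Prod.snd_add, Prod.smul_snd, smul_eq_mul, LinearMap.inl_apply] at this
    linear_combination -this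
  exact hfst ▸ h a ⟨b, hsnd⟩

end AdjoinSolution

lemma Polynomial.X_pow_dvd_of_dvd_mul_C {R : Type*} [CommRing R] {c : R}
    (hc : c ∈ nonZeroDivisors R) {f : R[X]} {N : ℕ} (h : X ^ N ∣ f * C c) : X ^ N ∣ f := by
  rw [X_pow_dvd_iff] at h ⊢
  exact fun d hd => (mul_right_mem_nonZeroDivisors_eq_zero_iff hc).1 (coeff_mul_C f d c ▸ h d hd)

lemma pow_smul_eq_zero_of_le {R M : Type*} [Monoid R] [AddMonoid M] [DistribMulAction R M]
    {x : R} {y : M} {e e' : ℕ} (h : e ≤ e') (hy : x ^ e • y = 0) : x ^ e' • y = 0 := by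
  rw [← Nat.sub_add_cancel h, pow_add, mul_smul, hy, smul_zero]

lemma LinearMap.isCompl_range_ker_of_comp_eq_id {R M N : Type*} [Ring R] [AddCommGroup M]
    [Module R M] [AddCommGroup N] [Module R N] {f : M →ₗ[R] N} {r : N →ₗ[R] M}
    (h : r ∘ₗ f = LinearMap.id) : IsCompl (LinearMap.range f) (LinearMap.ker r) := by
  have hf : LinearMap.ker f.rangeRestrict = ⊥ := by
    rw [LinearMap.ker_rangeRestrict, LinearMap.ker_eq_bot]
    exact Function.LeftInverse.injective (g := r) (LinearMap.congr_fun h)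
  rw [← LinearMap.ker_comp_of_ker_eq_bot r hf]
  refine LinearMap.isCompl_of_proj ?_
  rintro ⟨_, y, rfl⟩
  exact Subtype.ext (by simp [← LinearMap.comp_apply, h])

lemma List.cons_ne_append_singleton {α : Type*} {a x : α} {w : List α} (ha : a ≠ x)
    (hw : ∀ w', w ≠ w' ++ [x]) : ∀ w', a :: w ≠ w' ++ [x]
  | [], h => ha (List.cons_eq_cons.1 h).1
  | _ :: w', h => hw w' (List.cons_eq_cons.1 h).2

lemma zeroLetter_ne_lastLetter (p : ℕ) [Fact p.Prime] : zeroLetter p ≠ lastLetter p := by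
  have := (Fact.out : p.Prime).two_le
  rw [Ne, Fin.ext_iff]
  change ¬0 = p - 1
  omega

namespace T

variable {p : ℕ} [Fact p.Prime] {Zp : Type} [CommRing Zp]
  {M N : Type*} [AddCommGroup M] [Module Zp[X] M] [AddCommGroup N] [Module Zp[X] N]

variable (Zp) in
structure SatisfiesRels (m : ℕ) (c : Word p → M) : Prop where
  eq_zero_of_length_lt : ∀ w : Word p, m < w.length → c w = 0
  rel_append_last : ∀ w : Word p, w.length ≤ m →
    (p : Zp[X]) • c (w ++ [lastLetter p]) - (X : Zp[X]) ^ p ^ (m + 1 - w.length) • c w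
      - c (w ++ [lastLetter p] ++ [zeroLetter p]) = 0
  rel_of_not_append_last : ∀ w : Word p, w.length ≤ m + 1 →
    (∀ w' : Word p, w ≠ w' ++ [lastLetter p]) → (p : Zp[X]) • c w - c (w ++ [zeroLetter p]) = 0

lemma mk_single (m : ℕ) (w : Word p) (r : Zp[X]) :
    (Submodule.Quotient.mk (single w r) : T p Zp m) = r • g p Zp m w := by
  rw [g, ← Submodule.Quotient.mk_smul, smul_single, smul_eq_mul, mul_one]

lemma satisfiesRels_g (m : ℕ) : SatisfiesRels Zp m (g p Zp m) := by
  have rel {x} (hx : x ∈ rels p Zp m) : (Submodule.Quotient.mk x : T p Zp m) = 0 :=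
    (Submodule.Quotient.mk_eq_zero _).2 (Submodule.subset_span hx)
  refine ⟨fun w hw => rel (.inl (.inl ⟨w, hw, rfl⟩)), fun w hw => ?_, fun w hw hne => ?_⟩
  · simpa [Submodule.Quotient.mk_sub, mk_single] using rel (.inl (.inr ⟨w, hw, rfl⟩))
  · simpa [Submodule.Quotient.mk_sub, mk_single] using rel (.inr ⟨w, hw, hne, rfl⟩)

lemma SatisfiesRels.comp {m : ℕ} {c : Word p → M} (hc : SatisfiesRels Zp m c)
    (j : M →ₗ[Zp[X]] N) : SatisfiesRels Zp m (j ∘ c) where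
  eq_zero_of_length_lt w hw := by simp [hc.eq_zero_of_length_lt w hw]
  rel_append_last w hw := by
    simpa only [Function.comp, ← map_smul, ← map_sub] using
      congrArg j (hc.rel_append_last w hw) |>.trans j.map_zero
  rel_of_not_append_last w hw hne := by
    simpa only [Function.comp, ← map_smul, ← map_sub] using
      congrArg j (hc.rel_of_not_append_last w hw hne) |>.trans j.map_zero

def lift {m : ℕ} (c : Word p → M) (hc : SatisfiesRels Zp m c) : T p Zp m →ₗ[Zp[X]] M :=
  Submodule.liftQ _ (linearCombination Zp[X] c) <| Submodule.span_le.2 <| by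
    rintro x ((⟨w, hw, rfl⟩ | ⟨w, hw, rfl⟩) | ⟨w, hw, hne, rfl⟩) <;>
      simp only [SetLike.mem_coe, LinearMap.mem_ker, map_sub, linearCombination_single, one_smul]
    exacts [hc.eq_zero_of_length_lt w hw, hc.rel_append_last w hw,
      hc.rel_of_not_append_last w hw hne]

@[simp]
lemma lift_g {m : ℕ} (c : Word p → M) (hc : SatisfiesRels Zp m c) (w : Word p) :
    lift c hc (g p Zp m w) = c w := by
  simp [lift, g]

lemma hom_ext {m : ℕ} {F G : T p Zp m →ₗ[Zp[X]] M}
    (h : ∀ w, F (g p Zp m w) = G (g p Zp m w)) : F = G :=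
  Submodule.linearMap_qext _ <| lhom_ext fun w r => by
    simp only [LinearMap.comp_apply, Submodule.mkQ_apply, mk_single, map_smul, h]

lemma span_range_g (m : ℕ) : Submodule.span Zp[X] (Set.range (g p Zp m)) = ⊤ := by
  have : Set.range (g p Zp m) =
      Submodule.mkQ _ '' Set.range (Finsupp.basisSingleOne (R := Zp[X]) (ι := Word p)) := by
    rw [← Set.range_comp]; rfl
  rw [this, Submodule.span_image, Finsupp.basisSingleOne.span_eq, Submodule.map_top,
    Submodule.range_mkQ]

/-- The exponent `2 * p ^ k` dominates the recursion `e (k + 1) = p ^ (k + 1) + e k` coming from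
the relation at `w ++ [p - 1]`, since `2 * p ^ k ≤ p ^ (k + 1)`. -/
lemma X_pow_smul_g_eq_zero (m : ℕ) :
    ∀ (k : ℕ) (w : Word p), m < w.length + k → (X : Zp[X]) ^ (2 * p ^ k) • g p Zp m w = 0
  | 0, w, hw => by rw [(satisfiesRels_g m).eq_zero_of_length_lt w (by omega), smul_zero]
  | k + 1, w, hw => by
    have hpk : 2 * p ^ k ≤ p ^ (k + 1) := by
      rw [pow_succ']; exact Nat.mul_le_mul_right _ (Fact.out : p.Prime).two_le
    rcases Nat.lt_or_ge m (w.length + k) with hlt | hge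
    · exact pow_smul_eq_zero_of_le (by omega) (X_pow_smul_g_eq_zero m k w hlt)
    have hrel := (satisfiesRels_g (Zp := Zp) m).rel_append_last w (by omega)
    rw [show m + 1 - w.length = k + 1 by omega, sub_sub, sub_eq_zero] at hrel
    have h₁ := X_pow_smul_g_eq_zero m k (w ++ [lastLetter p])
      (by simp only [List.length_append, List.length_singleton]; omega)
    have h₂ := X_pow_smul_g_eq_zero m k (w ++ [lastLetter p] ++ [zeroLetter p])
      (by simp only [List.length_append, List.length_singleton]; omega)
    have key : (X : Zp[X]) ^ (2 * p ^ k) • (X : Zp[X]) ^ p ^ (k + 1) • g p Zp m w = 0 := by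
      rw [eq_sub_of_add_eq hrel.symm, smul_sub, smul_comm, h₁, h₂, smul_zero, sub_zero]
    rw [smul_smul, ← pow_add] at key
    exact pow_smul_eq_zero_of_le (by omega) key

lemma X_pow_smul_g_nil_eq_zero (m : ℕ) : (X : Zp[X]) ^ p ^ (m + 2) • g p Zp m [] = 0 :=
  pow_smul_eq_zero_of_le
    (by rw [pow_succ' _ (m + 1)]; exact Nat.mul_le_mul_right _ (Fact.out : p.Prime).two_le)
    (X_pow_smul_g_eq_zero m (m + 1) [] (by simp))

lemma satisfiesRels_prepend {a : Fin p} (ha : a ≠ lastLetter p) (m : ℕ) :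
    SatisfiesRels Zp m (fun w => g p Zp (m + 1) (a :: w)) where
  eq_zero_of_length_lt w hw := (satisfiesRels_g _).eq_zero_of_length_lt _ (by simpa using hw)
  rel_append_last w hw := by
    simpa [Nat.add_sub_add_right] using
      (satisfiesRels_g (m + 1)).rel_append_last (a :: w) (by simpa using hw)
  rel_of_not_append_last w hw hne :=
    (satisfiesRels_g (m + 1)).rel_of_not_append_last (a :: w) (by simpa using hw)
      (List.cons_ne_append_singleton ha hne)

def prepend (a : Fin p) (ha : a ≠ lastLetter p) (m : ℕ) : T p Zp m →ₗ[Zp[X]] T p Zp (m + 1) :=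
  lift _ (satisfiesRels_prepend ha m)

@[simp]
lemma prepend_g {a : Fin p} (ha : a ≠ lastLetter p) (m : ℕ) (w : Word p) :
    prepend a ha m (g p Zp m w) = g p Zp (m + 1) (a :: w) :=
  lift_g _ _ w

def stripCoeff (a : Fin p) (c : Word p → M) (t : M) : Word p → M
  | [] => t
  | b :: u => if b = a then c u else 0

lemma SatisfiesRels.strip {m : ℕ} {c : Word p → M} (hc : SatisfiesRels Zp m c) {a : Fin p}
    {t : M} (hpt : (p : Zp[X]) • t = if zeroLetter p = a then c [] else 0)
    (hXt : (X : Zp[X]) ^ p ^ (m + 2) • t = 0) : SatisfiesRels Zp (m + 1) (stripCoeff a c t) where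
  eq_zero_of_length_lt
    | [], hw => absurd hw (by simp)
    | b :: u, hw => by
      simp only [stripCoeff]
      split_ifs
      exacts [hc.eq_zero_of_length_lt u (by simpa using hw), rfl]
  rel_append_last
    | [], _ => by
      simp only [stripCoeff, List.nil_append, List.cons_append, List.length_nil]
      split_ifs
      · simpa [hXt] using hc.rel_of_not_append_last [] (by simp) (by simp)
      · simpa using hXt
    | b :: u, hw => by
      simp only [stripCoeff, List.cons_append, List.length_cons]
      split_ifs
      · simpa [Nat.add_sub_add_right] using hc.rel_append_last u (by simpa using hw)
      · simp
  rel_of_not_append_last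
    | [], _, _ => by simp [stripCoeff, hpt, eq_comm]
    | b :: u, hw, hne => by
      simp only [stripCoeff, List.cons_append]
      split_ifs
      · exact hc.rel_of_not_append_last u (by simpa using hw)
          fun w' h => hne (b :: w') (by simp [h])
      · simp

def strip (a : Fin p) (ha : a ≠ zeroLetter p) (m : ℕ) : T p Zp (m + 1) →ₗ[Zp[X]] T p Zp m :=
  lift _ ((satisfiesRels_g m).strip (a := a) (t := 0) (by simp [Ne.symm ha]) (smul_zero _))

lemma strip_g {a : Fin p} (ha : a ≠ zeroLetter p) (m : ℕ) (w : Word p) :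
    strip a ha m (g p Zp (m + 1) w) = stripCoeff a (g p Zp m) 0 w :=
  lift_g _ _ w

lemma strip_comp_prepend {a : Fin p} (ha₀ : a ≠ zeroLetter p) (ha : a ≠ lastLetter p) (m : ℕ) :
    strip a ha₀ m ∘ₗ prepend a ha m = LinearMap.id (R := Zp[X]) :=
  hom_ext fun w => by simp [strip_g, stripCoeff]

lemma strip_surjective {a : Fin p} (ha : a ≠ zeroLetter p) (m : ℕ) :
    Function.Surjective (strip (Zp := Zp) a ha m) := by
  rw [← LinearMap.range_eq_top, eq_top_iff, ← span_range_g, Submodule.span_le]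
  rintro _ ⟨w, rfl⟩
  exact ⟨g p Zp (m + 1) (a :: w), by simp [strip_g, stripCoeff]⟩

def stripZero (m : ℕ) :
    T p Zp (m + 1) →ₗ[Zp[X]] AdjoinSolution (g p Zp m []) (p : Zp[X]) (X ^ p ^ (m + 2)) :=
  lift _ (((satisfiesRels_g m).comp AdjoinSolution.inl).strip (a := zeroLetter p)
    (t := AdjoinSolution.sol) (by simp [AdjoinSolution.smul_sol_left])
    AdjoinSolution.smul_sol_right)

lemma stripZero_comp_prepend (m : ℕ) :
    stripZero m ∘ₗ prepend (Zp := Zp) (zeroLetter p) (zeroLetter_ne_lastLetter p) m =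
      AdjoinSolution.inl :=
  hom_ext fun w => by simp [stripZero, stripCoeff]

lemma prepend_injective (hp : (p : Zp) ∈ nonZeroDivisors Zp) {a : Fin p} (ha : a ≠ lastLetter p)
    (m : ℕ) : Function.Injective (prepend (Zp := Zp) a ha m) := by
  by_cases ha₀ : a = zeroLetter p
  · subst ha₀
    refine Function.Injective.of_comp (f := stripZero m) ?_
    rw [← LinearMap.coe_comp, stripZero_comp_prepend]
    refine AdjoinSolution.inl_injective fun b hb => ?_
    obtain ⟨c, rfl⟩ := Polynomial.X_pow_dvd_of_dvd_mul_C hp (by rwa [map_natCast])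
    rw [mul_comm, mul_smul, X_pow_smul_g_nil_eq_zero, smul_zero]
  · exact Function.LeftInverse.injective (g := strip a ha₀ m)
      (LinearMap.congr_fun (strip_comp_prepend ha₀ ha m))

end T

/-- For any realization `Zp` of `ℤ_(p)` and `n ≥ 1`:
(1) for each letter `a ≤ p−2`, prepending `a` induces a well-defined injective
`R`-module homomorphism `T_(n−1) → T_n`;
(2) for `1 ≤ a ≤ p−2` the image of this map is a direct summand of `T_n`; and
(3) the assignment `g_((p−1)·w) ↦ g_w`, `g_u ↦ 0` for `u` not beginning with
`p−1`, induces a well-defined surjective `R`-module homomorphism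
`T_n → T_(n−1)`. -/
theorem stmt18 (p : ℕ) [Fact p.Prime] (Zp : Type) [CommRing Zp] [Algebra ℤ Zp]
    [IsLocalization.AtPrime Zp (Ideal.span {(p : ℤ)})] (n : ℕ) (hn : 1 ≤ n) :
    (∀ a : Fin p, (a : ℕ) ≤ p - 2 →
      ∃ f : T p Zp (n - 1) →ₗ[Polynomial Zp] T p Zp n,
        (∀ w : Word p, f (g p Zp (n - 1) w) = g p Zp n (a :: w)) ∧
        Function.Injective f) ∧
    (∀ a : Fin p, 1 ≤ (a : ℕ) → (a : ℕ) ≤ p - 2 →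
      ∃ f : T p Zp (n - 1) →ₗ[Polynomial Zp] T p Zp n,
        (∀ w : Word p, f (g p Zp (n - 1) w) = g p Zp n (a :: w)) ∧
        Function.Injective f ∧
        ∃ C : Submodule (Polynomial Zp) (T p Zp n), IsCompl (LinearMap.range f) C) ∧
    (∃ π : T p Zp n →ₗ[Polynomial Zp] T p Zp (n - 1),
      Function.Surjective π ∧
      (∀ w : Word p, π (g p Zp n (lastLetter p :: w)) = g p Zp (n - 1) w) ∧
      (∀ u : Word p, (∀ w : Word p, u ≠ lastLetter p :: w) → π (g p Zp n u) = 0)) := by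
  obtain ⟨m, rfl⟩ := Nat.exists_eq_add_of_le' hn
  rw [Nat.add_sub_cancel]
  have hp : (p : Zp) ∈ nonZeroDivisors Zp := by
    simpa using IsLocalization.nonZeroDivisors_le_comap (Ideal.span {(p : ℤ)}).primeCompl Zp
      (mem_nonZeroDivisors_of_ne_zero (Int.natCast_ne_zero.2 (Fact.out : p.Prime).ne_zero))
  have ne_last {a : Fin p} (ha : (a : ℕ) ≤ p - 2) : a ≠ lastLetter p := by
    have := (Fact.out : p.Prime).two_le
    rw [Ne, Fin.ext_iff]
    change ¬(a : ℕ) = p - 1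
    omega
  have last_ne_zero : lastLetter p ≠ zeroLetter p := (zeroLetter_ne_lastLetter p).symm
  refine ⟨fun a ha => ⟨T.prepend a (ne_last ha) m, T.prepend_g _ m, T.prepend_injective hp _ m⟩,
    fun a ha₁ ha => ⟨T.prepend a (ne_last ha) m, T.prepend_g _ m, T.prepend_injective hp _ m, _,
      LinearMap.isCompl_range_ker_of_comp_eq_id (T.strip_comp_prepend ?_ _ m)⟩,
    T.strip (lastLetter p) last_ne_zero m, T.strip_surjective _ m,
    fun w => by simp [T.strip_g, T.stripCoeff], fun u hu => ?_⟩
  · rw [ne_eq, Fin.ext_iff]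
    exact Nat.one_le_iff_ne_zero.1 ha₁
  · rw [T.strip_g]
    cases u with
    | nil => rfl
    | cons b w => exact if_neg fun h => hu w (by rw [h])

end
end
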